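/- arXiv:2605.22295 — 9 statements merged into one kernel-verified Lean document; each statement's English description precedes it below -/
import Mathlib

section
/- Let (X, dist) be a nonempty compact metric space and let μ be a Borel probability measure on X that is Ahlfors regular of dimension D > 0 with constants c₁, c₂ > 0, and whose ball volumes are Lipschitz in the radius with constant c₃ > 0 (i.e., μ(B(s, ρ+h)) − μ(B(s, ρ)) ≤ c₃·h for all s ∈ X and all ρ, h ≥ 0). For every M > 0 there exists a constant C > 0, depending only on D, c₁, c₂, c₃, diam(X) and M, with the following property. Let N ≥ 2 be an integer, let V > 0, and let x₁, …, x_N be random points of X defined on a common probability space such that for every open metric ball A ⊆ X the counting variable N_A = #{i ∈ {1,…,N} : x_i ∈ A} satisfies: (i) E[N_A] = N·μ(A); (ii) Var(N_A) ≤ V; (iii) P(|N_A − E[N_A]| ≥ t) ≤ 2·e^{−t/4} for every t ≥ Var(N_A), and P(|N_A − E[N_A]| ≥ t) ≤ 2·e^{−t²/(4·Var(N_A))} for every 0 < t ≤ Var(N_A). Then, with probability at least 1 − N^{−M}, one has sup_A |N_A − N·μ(A)| ≤ C·(log N + √(V·log N)), where the supremum is over all open metric balls A ⊆ X. -/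
open MeasureTheory ProbabilityTheory Metric Real

/-- `countIn x A ω` is the number of indices `i` such that the random point `x i ω` lies
in the set `A`. -/
noncomputable def countIn {Ω X : Type*} {N : ℕ} (x : Fin N → Ω → X) (A : Set X) (ω : Ω) : ℕ :=
  Nat.card {i : Fin N // x i ω ∈ A}

/-!
Cover `X` by a net at scale `ε = log N / N`. Balls of radius `ε / 2` around a maximal
`ε`-separated set are disjoint, so the lower Ahlfors bound gives a net of `O(N ^ D)` points.
Every ball `B(s, ρ)` is sandwiched as `B(s', k ε) ⊆ B(s, ρ) ⊆ B(s', (k + 3) ε)` between two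
balls centred at a net point, and by the Lipschitz property their expected counts differ by at
most `3 c₃ N ε = 3 c₃ log N`. Hence it suffices to control the `O(N ^ (D + 1))` grid balls
`B(s', k ε)`. At level `t = 4 κ log N + 2 √(κ V log N)` both regimes of the tail bound give
probability at most `2 N ^ (-κ)` for each of them, and `κ` is chosen so that the union bound
costs at most `N ^ (-M)`.
-/

theorem countIn_mono {Ω X : Type*} {N : ℕ} (x : Fin N → Ω → X) (ω : Ω) :
    Monotone fun A => countIn x A ω :=
  fun _ _ h => Nat.card_le_card_of_injective (Set.inclusion fun _ hi => h hi)
    (Set.inclusion_injective _)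

section Net

variable {X : Type*} [MetricSpace X] [BoundedSpace X] [MeasurableSpace X]
  [OpensMeasurableSpace X] {μ : Measure X} [IsFiniteMeasure μ] {D c ε : ℝ}

theorem card_le_of_isSeparated_of_measure_ball_ge (hc : 0 < c)
    (hreg : ∀ (x : X) (r : ℝ), 0 < r → r < diam (Set.univ : Set X) →
      c * r ^ D ≤ μ.real (ball x r))
    (hε : 0 < ε) {F : Finset X} (hF : IsSeparated (ENNReal.ofReal ε) (F : Set X)) :
    (F.card : ℝ) ≤ max 1 (μ.real Set.univ * (2 / ε) ^ D / c) := by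
  have hsep : ∀ a ∈ F, ∀ b ∈ F, a ≠ b → ε < dist a b := fun a ha b hb hab => by
    simpa [edist_dist, ENNReal.ofReal_lt_ofReal_iff_of_nonneg hε.le] using hF ha hb hab
  rcases lt_or_ge (ε / 2) (diam (Set.univ : Set X)) with hdiam | hdiam
  · have hdisj : (F : Set X).PairwiseDisjoint (fun a => ball a (ε / 2)) :=
      fun a ha b hb hab => ball_disjoint_ball (by linarith [hsep a ha b hb hab])
    have hmass : (F.card : ℝ) * (c * (ε / 2) ^ D) ≤ μ.real Set.univ :=
      calc (F.card : ℝ) * (c * (ε / 2) ^ D) ≤ ∑ a ∈ F, μ.real (ball a (ε / 2)) := by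
            rw [← nsmul_eq_mul, ← Finset.sum_const]
            exact Finset.sum_le_sum fun a _ => hreg a _ (by positivity) hdiam
        _ = μ.real (⋃ a ∈ F, ball a (ε / 2)) :=
            (measureReal_biUnion_finset hdisj fun _ _ => measurableSet_ball).symm
        _ ≤ μ.real Set.univ := measureReal_mono (Set.subset_univ _)
    refine le_max_of_le_right ?_
    rw [le_div_iff₀ hc, div_rpow zero_le_two hε.le, mul_div_assoc', le_div_iff₀ (by positivity)]
    rw [div_rpow hε.le zero_le_two] at hmass
    field_simp at hmass
    nlinarith [hmass]
  · -- any two points are closer than `ε`, so `F` has at most one point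
    refine le_max_of_le_left ?_
    have hsub : ∀ a ∈ F, ∀ b ∈ F, a = b := fun a ha b hb => by
      by_contra hab
      have := dist_le_diam_of_mem BoundedSpace.bounded_univ (Set.mem_univ a) (Set.mem_univ b)
      linarith [hsep a ha b hb hab]
    exact_mod_cast Finset.card_le_one.mpr hsub

theorem exists_finset_dist_le_of_measure_ball_ge (hc : 0 < c)
    (hreg : ∀ (x : X) (r : ℝ), 0 < r → r < diam (Set.univ : Set X) →
      c * r ^ D ≤ μ.real (ball x r))
    (hε : 0 < ε) :
    ∃ S : Finset X, (S.card : ℝ) ≤ max 1 (μ.real Set.univ * (2 / ε) ^ D / c) ∧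
      ∀ y, ∃ s ∈ S, dist y s ≤ ε := by
  set B := max 1 (μ.real Set.univ * (2 / ε) ^ D / c)
  have hpack : packingNumber ε.toNNReal (Set.univ : Set X) ≤ ⌊B⌋₊ := by
    refine iSup₂_le fun C _ => iSup_le fun hC => ?_
    by_contra! hlt
    obtain ⟨T, hTC, hT⟩ := Set.exists_subset_encard_eq (Order.add_one_le_of_lt hlt)
    have hTfin : T.Finite := Set.finite_of_encard_eq_coe hT
    have hcard := card_le_of_isSeparated_of_measure_ball_ge hc hreg hε (F := hTfin.toFinset)
      (by simpa [ENNReal.ofReal] using hC.subset hTC)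
    rw [← Set.ncard_eq_toFinset_card T hTfin, Set.ncard_def, hT] at hcard
    exact (Nat.lt_floor_add_one B).not_ge (by exact_mod_cast hcard)
  have hfin : packingNumber ε.toNNReal (Set.univ : Set X) ≠ ⊤ :=
    ne_top_of_le_ne_top (ENat.natCast_ne_top _) hpack
  have hS : (maximalSeparatedSet ε.toNNReal (Set.univ : Set X)).Finite := by
    rw [← Set.encard_ne_top_iff, encard_maximalSeparatedSet hfin]
    exact hfin
  refine ⟨hS.toFinset, ?_, fun y => ?_⟩
  · have : (hS.toFinset.card : ℕ∞) ≤ ⌊B⌋₊ := by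
      rw [← Set.encard_coe_eq_coe_finsetCard, Set.Finite.coe_toFinset,
        encard_maximalSeparatedSet hfin]
      exact hpack
    exact (Nat.cast_le.mpr (by exact_mod_cast this)).trans (Nat.floor_le (by positivity))
  · obtain ⟨s, hs, hys⟩ := isCover_maximalSeparatedSet hfin (Set.mem_univ y)
    exact ⟨s, by simpa using hs, (edist_le_ofReal hε.le).mp hys⟩

theorem exists_net_of_scale_log_div (hD : 0 ≤ D) (hc : 0 < c)
    (hreg : ∀ (x : X) (r : ℝ), 0 < r → r < diam (Set.univ : Set X) →
      c * r ^ D ≤ μ.real (ball x r)) :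
    ∃ A ≥ (1 : ℝ), ∀ N : ℕ, 2 ≤ N → ∃ S : Finset X,
      (S.card : ℝ) ≤ A * (N : ℝ) ^ D ∧ ∀ y, ∃ s ∈ S, dist y s ≤ log N / N := by
  set A := max 1 (μ.real Set.univ * (2 / log 2) ^ D / c)
  refine ⟨A, le_max_left _ _, fun N hN => ?_⟩
  have hN2 : (2 : ℝ) ≤ N := by exact_mod_cast hN
  have hlog2 : 0 < log 2 := log_pos one_lt_two
  have hε : 0 < log N / N := div_pos (log_pos (by linarith)) (by linarith)
  obtain ⟨S, hScard, hS⟩ := exists_finset_dist_le_of_measure_ball_ge hc hreg hε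
  refine ⟨S, hScard.trans (max_le ?_ ?_), hS⟩
  · nlinarith [le_max_left 1 (μ.real Set.univ * (2 / log 2) ^ D / c),
      one_le_rpow (by linarith : (1 : ℝ) ≤ N) hD]
  have h2ε : 2 / (log N / N) ≤ 2 / log 2 * N := by
    rw [div_div_eq_mul_div, div_mul_eq_mul_div, mul_comm (2 : ℝ)]
    exact div_le_div₀ (by positivity) le_rfl hlog2 (log_le_log two_pos hN2)
  calc μ.real Set.univ * (2 / (log N / N)) ^ D / c
      ≤ μ.real Set.univ * (2 / log 2 * N) ^ D / c := by gcongr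
    _ = μ.real Set.univ * (2 / log 2) ^ D / c * (N : ℝ) ^ D := by
      rw [mul_rpow (by positivity) (by positivity)]
      ring
    _ ≤ A * (N : ℝ) ^ D := by gcongr; exact le_max_right _ _

theorem exists_ball_grid (hD : 0 ≤ D) (hc : 0 < c)
    (hreg : ∀ (x : X) (r : ℝ), 0 < r → r < diam (Set.univ : Set X) →
      c * r ^ D ≤ μ.real (ball x r)) :
    ∃ A ≥ (1 : ℝ), ∀ N : ℕ, 2 ≤ N → ∃ (S : Finset X) (K : ℕ),
      (∀ y, ∃ s ∈ S, dist y s ≤ log N / N) ∧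
      diam (Set.univ : Set X) + 3 * (log N / N) ≤ K * (log N / N) ∧
      (S.card : ℝ) * (K + 1) ≤ A * (N : ℝ) ^ (D + 1) := by
  obtain ⟨A₁, hA₁, hnet⟩ := exists_net_of_scale_log_div hD hc hreg
  set d := diam (Set.univ : Set X)
  have hd : 0 ≤ d := diam_nonneg
  have hlog2 : 0 < log 2 := log_pos one_lt_two
  set A₂ := d / log 2 + 5
  have hA₂ : 1 ≤ A₂ := by
    have : 0 ≤ d / log 2 := by positivity
    linarith
  refine ⟨A₁ * A₂, one_le_mul_of_one_le_of_one_le hA₁ hA₂, fun N hN => ?_⟩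
  have hN2 : (2 : ℝ) ≤ N := by exact_mod_cast hN
  set ε := log N / N
  have hε : 0 < ε := div_pos (log_pos (by linarith)) (by linarith)
  obtain ⟨S, hScard, hS⟩ := hnet N hN
  refine ⟨S, ⌈d / ε⌉₊ + 3, hS, ?_, ?_⟩
  · have := (div_le_iff₀ hε).mp (Nat.le_ceil (d / ε))
    push_cast
    linarith
  have hK : ((⌈d / ε⌉₊ + 3 : ℕ) : ℝ) + 1 ≤ A₂ * N := by
    have hceil := Nat.ceil_lt_add_one (div_nonneg hd hε.le)
    have hdε : d / ε ≤ d / log 2 * N := by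
      rw [div_div_eq_mul_div, div_mul_eq_mul_div]
      exact div_le_div₀ (by positivity) le_rfl hlog2 (log_le_log two_pos hN2)
    push_cast
    nlinarith
  calc (S.card : ℝ) * ((⌈d / ε⌉₊ + 3 : ℕ) + 1) ≤ A₁ * (N : ℝ) ^ D * (A₂ * N) :=
        mul_le_mul hScard hK (by positivity) (by positivity)
    _ = A₁ * A₂ * (N : ℝ) ^ (D + 1) := by
        rw [rpow_add_one (by positivity)]
        ring

end Net

section BallGrid

variable {X : Type*} [PseudoMetricSpace X]

theorem ball_eq_univ_of_diam_lt [BoundedSpace X] {r : ℝ} (hr : diam (Set.univ : Set X) < r)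
    (x : X) : ball x r = Set.univ :=
  Set.eq_univ_of_forall fun y =>
    (dist_le_diam_of_mem BoundedSpace.bounded_univ (Set.mem_univ y) (Set.mem_univ x)).trans_lt hr

theorem exists_nat_ball_subset_ball_subset {s s' : X} {ε : ℝ} (hε : 0 < ε)
    (hs : dist s s' ≤ ε) (ρ : ℝ) :
    ∃ k : ℕ, (k : ℝ) * ε ≤ max 0 (ρ - ε) ∧
      ball s' (k * ε) ⊆ ball s ρ ∧ ball s ρ ⊆ ball s' ((k + 3) * ε) := by
  have hlt : ρ < (⌊ρ / ε⌋₊ + 1) * ε := (div_lt_iff₀ hε).mp (Nat.lt_floor_add_one _)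
  cases hm : ⌊ρ / ε⌋₊ with
  | zero =>
    rw [hm, Nat.cast_zero, zero_add, one_mul] at hlt
    refine ⟨0, by simp, by simp, ball_subset_ball' (by push_cast; linarith)⟩
  | succ k =>
    have hle : (k + 1 : ℝ) * ε ≤ ρ := by
      have := Nat.floor_le (a := ρ / ε) (by
        by_contra! h
        rw [Nat.floor_eq_zero.mpr (h.trans one_pos)] at hm
        omega)
      rw [hm, le_div_iff₀ hε] at this
      exact_mod_cast this
    rw [hm] at hlt
    push_cast at hlt
    refine ⟨k, le_max_of_le_right (by linarith), ball_subset_ball' ?_,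
      ball_subset_ball' (by linarith)⟩
    rw [dist_comm]
    linarith

theorem abs_sub_le_of_forall_ball_grid [BoundedSpace X] {F G : Set X → ℝ}
    (hF : Monotone F) (hG : Monotone G) {c ε t : ℝ} (hε : 0 < ε)
    (hG_lip : ∀ (s : X) (ρ h : ℝ), 0 ≤ ρ → 0 ≤ h → G (ball s (ρ + h)) - G (ball s ρ) ≤ c * h)
    {S : Set X} (hS : ∀ y, ∃ s ∈ S, dist y s ≤ ε)
    {K : ℕ} (hK : diam (Set.univ : Set X) + 3 * ε ≤ K * ε)
    (hgrid : ∀ s ∈ S, ∀ k ≤ K, |F (ball s (k * ε)) - G (ball s (k * ε))| ≤ t)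
    (s : X) (ρ : ℝ) :
    |F (ball s ρ) - G (ball s ρ)| ≤ t + 3 * c * ε := by
  set d := diam (Set.univ : Set X)
  -- balls beyond the diameter are all of `X`, so we may cap the radius
  have hcap : ball s (min ρ (d + ε)) = ball s ρ := by
    rcases le_total ρ (d + ε) with h | h
    · rw [min_eq_left h]
    · rw [min_eq_right h, ball_eq_univ_of_diam_lt (by linarith), ball_eq_univ_of_diam_lt]
      linarith
  rw [← hcap]
  obtain ⟨s', hs', hss'⟩ := hS s
  obtain ⟨k, hkρ, hlow, hup⟩ := exists_nat_ball_subset_ball_subset hε hss' (min ρ (d + ε))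
  have hkd : (k : ℝ) * ε ≤ d :=
    hkρ.trans (max_le diam_nonneg (by linarith [min_le_right ρ (d + ε)]))
  have hkK : k + 3 ≤ K := by
    have : ((k + 3 : ℕ) : ℝ) * ε ≤ K * ε := by
      push_cast
      linarith
    exact_mod_cast le_of_mul_le_mul_right this hε
  have hin := abs_le.mp (hgrid s' hs' k (by omega))
  have hout := abs_le.mp (hgrid s' hs' (k + 3) hkK)
  have hlip := hG_lip s' (k * ε) (3 * ε) (by positivity) (by positivity)
  push_cast at hout
  rw [show (k : ℝ) * ε + 3 * ε = (k + 3) * ε by ring] at hlip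
  rw [abs_le]
  constructor <;> linarith [hF hlow, hF hup, hG hlow, hG hup]

end BallGrid

theorem mul_rpow_sub_logb_two_le {B N : ℝ} (hB : 1 ≤ B) (hN : 2 ≤ N) (e : ℝ) :
    B * N ^ (e - logb 2 B) ≤ N ^ e := by
  have hB_le : B ≤ N ^ logb 2 B :=
    calc B = 2 ^ logb 2 B := (rpow_logb two_pos (by norm_num) (by linarith)).symm
      _ ≤ N ^ logb 2 B := rpow_le_rpow zero_le_two hN (logb_nonneg one_lt_two hB)
  rw [rpow_sub (by linarith), mul_div_left_comm]
  exact mul_le_of_le_one_right (by positivity) ((div_le_one (by positivity)).mpr hB_le)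

theorem mul_two_mul_exp_neg_le_rpow_neg {A N n D M : ℝ} (hA : 1 ≤ A) (hN : 2 ≤ N)
    (hn : n ≤ A * N ^ (D + 1)) :
    n * (2 * exp (-((D + 1 + M + logb 2 (2 * A)) * log N))) ≤ N ^ (-M) := by
  rw [← neg_mul, mul_comm _ (log N), ← rpow_def_of_pos (by linarith)]
  calc n * (2 * N ^ (-(D + 1 + M + logb 2 (2 * A))))
      ≤ A * N ^ (D + 1) * (2 * N ^ (-(D + 1 + M + logb 2 (2 * A)))) := by gcongr
    _ = 2 * A * N ^ (-M - logb 2 (2 * A)) := by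
      rw [mul_mul_mul_comm, ← rpow_add (by linarith)]
      ring_nf
    _ ≤ N ^ (-M) := mul_rpow_sub_logb_two_le (by linarith) hN _

section Probability

variable {Ω : Type*} [MeasurableSpace Ω] {P : Measure Ω}

theorem measure_le_two_mul_exp_neg_of_bernstein {Y : Ω → ℝ} {m V b : ℝ} (hb : 0 < b)
    (hvar : variance Y P ≤ V)
    (hlarge : ∀ t, variance Y P ≤ t →
      P {ω | t ≤ |Y ω - m|} ≤ ENNReal.ofReal (2 * exp (-t / 4)))
    (hsmall : ∀ t, 0 < t → t ≤ variance Y P →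
      P {ω | t ≤ |Y ω - m|} ≤ ENNReal.ofReal (2 * exp (-t ^ 2 / (4 * variance Y P)))) :
    P {ω | 4 * b + 2 * √(b * V) ≤ |Y ω - m|} ≤ ENNReal.ofReal (2 * exp (-b)) := by
  set t := 4 * b + 2 * √(b * V)
  have ht : 4 * b ≤ t := le_add_of_nonneg_right (by positivity)
  rcases le_or_gt (variance Y P) t with hv | hv
  · refine (hlarge t hv).trans (ENNReal.ofReal_le_ofReal ?_)
    gcongr
    linarith
  · have hV : 0 ≤ b * V := mul_nonneg hb.le (by linarith [variance_nonneg Y P])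
    have htV : 4 * (b * V) ≤ t ^ 2 := by
      nlinarith [sq_sqrt hV, sqrt_nonneg (b * V)]
    refine (hsmall t (by linarith) hv.le).trans (ENNReal.ofReal_le_ofReal ?_)
    gcongr
    rw [le_neg, ← neg_div, neg_neg, le_div_iff₀ (by linarith)]
    nlinarith

theorem measure_biUnion_le_card_mul_of_bernstein {ι : Type*} (I : Finset ι)
    {Y : ι → Ω → ℝ} {m : ι → ℝ} {V b : ℝ} (hb : 0 < b)
    (hvar : ∀ i, variance (Y i) P ≤ V)
    (hlarge : ∀ i t, variance (Y i) P ≤ t →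
      P {ω | t ≤ |Y i ω - m i|} ≤ ENNReal.ofReal (2 * exp (-t / 4)))
    (hsmall : ∀ i t, 0 < t → t ≤ variance (Y i) P →
      P {ω | t ≤ |Y i ω - m i|} ≤
        ENNReal.ofReal (2 * exp (-t ^ 2 / (4 * variance (Y i) P)))) :
    P (⋃ i ∈ I, {ω | 4 * b + 2 * √(b * V) ≤ |Y i ω - m i|}) ≤
      ENNReal.ofReal (I.card * (2 * exp (-b))) :=
  calc P (⋃ i ∈ I, {ω | 4 * b + 2 * √(b * V) ≤ |Y i ω - m i|})
      ≤ ∑ i ∈ I, P {ω | 4 * b + 2 * √(b * V) ≤ |Y i ω - m i|} := measure_biUnion_finset_le _ _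
    _ ≤ ∑ _i ∈ I, ENNReal.ofReal (2 * exp (-b)) := Finset.sum_le_sum fun i _ =>
        measure_le_two_mul_exp_neg_of_bernstein hb (hvar i) (hlarge i) (hsmall i)
    _ = ENNReal.ofReal (I.card * (2 * exp (-b))) := by
        rw [Finset.sum_const, nsmul_eq_mul, ENNReal.ofReal_mul (Nat.cast_nonneg _),
          ENNReal.ofReal_natCast]

theorem ofReal_one_sub_le_measure [IsProbabilityMeasure P] {B G : Set Ω} {q : ℝ}
    (hq : 0 ≤ q) (hB : P B ≤ ENNReal.ofReal q) (hBG : Bᶜ ⊆ G) :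
    ENNReal.ofReal (1 - q) ≤ P G := by
  rw [ENNReal.ofReal_sub _ hq, ENNReal.ofReal_one, tsub_le_iff_right]
  calc 1 = P (Bᶜ ∪ B) := by rw [Set.compl_union_self, measure_univ]
    _ ≤ P G + P B := (measure_union_le _ _).trans (add_le_add_left (measure_mono hBG) _)
    _ ≤ P G + ENNReal.ofReal q := add_le_add_right hB _

end Probability

theorem discrepancy_of_concentrated_point_process_general {X : Type*} [MetricSpace X] [CompactSpace X]
    [MeasurableSpace X] [BorelSpace X] (μ : Measure X) [IsProbabilityMeasure μ]
    (D c₁ c₂ c₃ : ℝ) (hD : 0 < D) (hc₁ : 0 < c₁) (hc₃ : 0 < c₃)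
    (hreg : ∀ (x : X) (r : ℝ), 0 < r → r < Metric.diam (Set.univ : Set X) →
      c₁ * r ^ D ≤ (μ (Metric.ball x r)).toReal ∧
        (μ (Metric.ball x r)).toReal ≤ c₂ * r ^ D)
    (hlip : ∀ (s : X) (ρ h : ℝ), 0 ≤ ρ → 0 ≤ h →
      (μ (Metric.ball s (ρ + h))).toReal - (μ (Metric.ball s ρ)).toReal ≤ c₃ * h)
    (M : ℝ) (hM : 0 < M) :
    ∃ C > (0 : ℝ), ∀ (Ω : Type) (mΩ : MeasurableSpace Ω) (P : Measure Ω),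
      IsProbabilityMeasure P →
      ∀ N : ℕ, 2 ≤ N → ∀ V : ℝ, 0 < V → ∀ x : Fin N → Ω → X,
      -- (i) correct expectation on every open ball
      (∀ (s : X) (ρ : ℝ),
        ∫ ω, (countIn x (Metric.ball s ρ) ω : ℝ) ∂P = N * (μ (Metric.ball s ρ)).toReal) →
      -- (ii) variance at most `V` on every open ball
      (∀ (s : X) (ρ : ℝ),
        variance (fun ω => (countIn x (Metric.ball s ρ) ω : ℝ)) P ≤ V) →
      -- (iii) Bernstein--Chernoff tail bound, large deviations
      (∀ (s : X) (ρ : ℝ) (t : ℝ),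
        variance (fun ω => (countIn x (Metric.ball s ρ) ω : ℝ)) P ≤ t →
        P {ω | t ≤ |(countIn x (Metric.ball s ρ) ω : ℝ)
            - N * (μ (Metric.ball s ρ)).toReal|} ≤ ENNReal.ofReal (2 * Real.exp (-t / 4))) →
      -- (iii) Bernstein--Chernoff tail bound, small deviations
      (∀ (s : X) (ρ : ℝ) (t : ℝ), 0 < t →
        t ≤ variance (fun ω => (countIn x (Metric.ball s ρ) ω : ℝ)) P →
        P {ω | t ≤ |(countIn x (Metric.ball s ρ) ω : ℝ)
            - N * (μ (Metric.ball s ρ)).toReal|} ≤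
          ENNReal.ofReal (2 * Real.exp
            (-t ^ 2 / (4 * variance (fun ω => (countIn x (Metric.ball s ρ) ω : ℝ)) P)))) →
      ENNReal.ofReal (1 - (N : ℝ) ^ (-M)) ≤
        P {ω | ∀ (s : X) (ρ : ℝ),
          |(countIn x (Metric.ball s ρ) ω : ℝ) - N * (μ (Metric.ball s ρ)).toReal| ≤
            C * (Real.log N + Real.sqrt (V * Real.log N))} := by
  obtain ⟨A, hA, hgrid⟩ := exists_ball_grid hD.le hc₁ fun x r h₀ h₁ => (hreg x r h₀ h₁).1
  set κ := D + 1 + M + logb 2 (2 * A)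
  have hκ : 0 < κ := by
    have := logb_nonneg one_lt_two (by linarith : 1 ≤ 2 * A)
    positivity
  refine ⟨4 * κ + 3 * c₃ + 2 * √κ, by positivity, ?_⟩
  intro Ω _ P _ N hN V _ x _ hvar hlarge hsmall
  have hN2 : (2 : ℝ) ≤ N := by exact_mod_cast hN
  have hL : 0 < log N := log_pos (by linarith)
  obtain ⟨S, K, hS, hK, hcard⟩ := hgrid N hN
  set ε := log N / N
  have hbad := measure_biUnion_le_card_mul_of_bernstein (P := P) (S ×ˢ Finset.range (K + 1))
    (Y := fun p ω => (countIn x (ball p.1 (p.2 * ε)) ω : ℝ))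
    (m := fun p => N * (μ (ball p.1 (p.2 * ε))).toReal) (mul_pos hκ hL) (fun _ => hvar _ _)
    (fun _ => hlarge _ _) (fun _ => hsmall _ _)
  refine ofReal_one_sub_le_measure (by positivity) (hbad.trans (ENNReal.ofReal_le_ofReal ?_)) ?_
  · rw [Finset.card_product, Finset.card_range, Nat.cast_mul]
    exact mul_two_mul_exp_neg_le_rpow_neg hA hN2 (by exact_mod_cast hcard)
  · intro ω hω s ρ
    simp only [Set.mem_compl_iff, Set.mem_iUnion, Finset.mem_product, Finset.mem_range,
      Set.mem_ofPred_eq, not_exists, not_le] at hω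
    refine (abs_sub_le_of_forall_ball_grid (F := fun A => (countIn x A ω : ℝ))
      (G := fun A => N * (μ A).toReal) (fun _ _ h => Nat.cast_le.mpr (countIn_mono x ω h))
      (fun _ _ h => mul_le_mul_of_nonneg_left (measureReal_mono h) (Nat.cast_nonneg _))
      (c := N * c₃) (by positivity) (fun s ρ h hρ hh => by nlinarith [hlip s ρ h hρ hh]) hS hK
      (fun s hs k hk => (hω (s, k) ⟨hs, by omega⟩).le) s ρ).trans ?_
    have hNε : 3 * (N * c₃) * ε = 3 * c₃ * log N := by
      simp only [ε]
      field_simp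
    rw [hNε, mul_assoc, mul_comm (log N), sqrt_mul hκ.le]
    nlinarith [mul_nonneg (sqrt_nonneg κ) hL.le, sqrt_nonneg (V * log N)]

/-- Discrepancy bound for random point configurations whose ball-counting variables have the
correct expectation, variance at most `V`, and satisfy Bernstein--Chernoff tail bounds, on a
compact Ahlfors regular metric measure space whose ball volumes are Lipschitz in the radius:
with probability at least `1 - N^{-M}`, the discrepancy with respect to metric balls is at
most `C (log N + √(V log N))`. -/
theorem discrepancy_of_concentrated_point_process {X : Type*} [MetricSpace X] [CompactSpace X]
    [Nonempty X] [MeasurableSpace X] [BorelSpace X] (μ : Measure X) [IsProbabilityMeasure μ]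
    (D c₁ c₂ c₃ : ℝ) (hD : 0 < D) (hc₁ : 0 < c₁) (hc₂ : 0 < c₂) (hc₃ : 0 < c₃)
    (hreg : ∀ (x : X) (r : ℝ), 0 < r → r < Metric.diam (Set.univ : Set X) →
      c₁ * r ^ D ≤ (μ (Metric.ball x r)).toReal ∧
        (μ (Metric.ball x r)).toReal ≤ c₂ * r ^ D)
    (hlip : ∀ (s : X) (ρ h : ℝ), 0 ≤ ρ → 0 ≤ h →
      (μ (Metric.ball s (ρ + h))).toReal - (μ (Metric.ball s ρ)).toReal ≤ c₃ * h)
    (M : ℝ) (hM : 0 < M) :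
    ∃ C > (0 : ℝ), ∀ (Ω : Type) (mΩ : MeasurableSpace Ω) (P : Measure Ω),
      IsProbabilityMeasure P →
      ∀ N : ℕ, 2 ≤ N → ∀ V : ℝ, 0 < V → ∀ x : Fin N → Ω → X,
      -- (i) correct expectation on every open ball
      (∀ (s : X) (ρ : ℝ),
        ∫ ω, (countIn x (Metric.ball s ρ) ω : ℝ) ∂P = N * (μ (Metric.ball s ρ)).toReal) →
      -- (ii) variance at most `V` on every open ball
      (∀ (s : X) (ρ : ℝ),
        variance (fun ω => (countIn x (Metric.ball s ρ) ω : ℝ)) P ≤ V) →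
      -- (iii) Bernstein--Chernoff tail bound, large deviations
      (∀ (s : X) (ρ : ℝ) (t : ℝ),
        variance (fun ω => (countIn x (Metric.ball s ρ) ω : ℝ)) P ≤ t →
        P {ω | t ≤ |(countIn x (Metric.ball s ρ) ω : ℝ)
            - N * (μ (Metric.ball s ρ)).toReal|} ≤ ENNReal.ofReal (2 * Real.exp (-t / 4))) →
      -- (iii) Bernstein--Chernoff tail bound, small deviations
      (∀ (s : X) (ρ : ℝ) (t : ℝ), 0 < t →
        t ≤ variance (fun ω => (countIn x (Metric.ball s ρ) ω : ℝ)) P →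
        P {ω | t ≤ |(countIn x (Metric.ball s ρ) ω : ℝ)
            - N * (μ (Metric.ball s ρ)).toReal|} ≤
          ENNReal.ofReal (2 * Real.exp
            (-t ^ 2 / (4 * variance (fun ω => (countIn x (Metric.ball s ρ) ω : ℝ)) P)))) →
      ENNReal.ofReal (1 - (N : ℝ) ^ (-M)) ≤
        P {ω | ∀ (s : X) (ρ : ℝ),
          |(countIn x (Metric.ball s ρ) ω : ℝ) - N * (μ (Metric.ball s ρ)).toReal| ≤
            C * (Real.log N + Real.sqrt (V * Real.log N))} :=
  discrepancy_of_concentrated_point_process_general μ D c₁ c₂ c₃ hD hc₁ hc₃ hreg hlip M hM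
end

section
/- Let (X, dist) be a metric space and μ a Borel probability measure on X whose ball volumes are Lipschitz in the radius with constant c₃ > 0 (i.e., μ(B(s, ρ+h)) − μ(B(s, ρ)) ≤ c₃·h for all s ∈ X and all ρ, h ≥ 0). Let N ≥ 1 be an integer, let x₁, …, x_N ∈ X, let t ≥ 0, and let F be a family of pairs (s, ρ) ∈ X × [0, ∞) such that: (a) for every (s, ρ) ∈ F one has |N_{B(s,ρ)} − N·μ(B(s,ρ))| ≤ t, and (b) for every x ∈ X and r ≥ 0 there exist a point s ∈ X and radii ρ₁ ≤ ρ₂ with (s, ρ₁), (s, ρ₂) ∈ F, ρ₂ − ρ₁ ≤ 1/N, and B(s, ρ₁) ⊆ B(x, r) ⊆ B(s, ρ₂). Then for every x ∈ X and r ≥ 0 one has |N_{B(x,r)} − N·μ(B(x,r))| ≤ t + c₃. -/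
open MeasureTheory Metric

/-- `countPts x A` is the number of indices `i` with `x i ∈ A`. -/
noncomputable def countPts {X : Type*} {N : ℕ} (x : Fin N → X) (A : Set X) : ℕ :=
  Nat.card {i : Fin N // x i ∈ A}

/-- If every ball of a family `F` has discrepancy at most `t`, every ball is sandwiched
between two balls of `F` with the same center and radii differing by at most `1/N`, and the
ball volumes of `μ` are Lipschitz in the radius with constant `c₃`, then every metric ball
has discrepancy at most `t + c₃`. -/
theorem discrepancy_from_approximating_family {X : Type*} [MetricSpace X] [MeasurableSpace X]
    (μ : Measure X) [IsProbabilityMeasure μ] (c₃ : ℝ) (hc₃ : 0 < c₃)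
    (hlip : ∀ (s : X) (ρ h : ℝ), 0 ≤ ρ → 0 ≤ h →
      (μ (Metric.ball s (ρ + h))).toReal - (μ (Metric.ball s ρ)).toReal ≤ c₃ * h)
    (N : ℕ) (hN : 1 ≤ N) (x : Fin N → X) (t : ℝ) (ht : 0 ≤ t)
    (F : Set (X × ℝ)) (hF : ∀ p ∈ F, 0 ≤ p.2)
    (ha : ∀ p ∈ F,
      |(countPts x (Metric.ball p.1 p.2) : ℝ) - N * (μ (Metric.ball p.1 p.2)).toReal| ≤ t)
    (hb : ∀ (x₀ : X) (r : ℝ), 0 ≤ r → ∃ (s : X) (ρ₁ ρ₂ : ℝ),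
      (s, ρ₁) ∈ F ∧ (s, ρ₂) ∈ F ∧ ρ₁ ≤ ρ₂ ∧ ρ₂ - ρ₁ ≤ 1 / N ∧
      Metric.ball s ρ₁ ⊆ Metric.ball x₀ r ∧ Metric.ball x₀ r ⊆ Metric.ball s ρ₂) :
    ∀ (x₀ : X) (r : ℝ), 0 ≤ r →
      |(countPts x (Metric.ball x₀ r) : ℝ) - N * (μ (Metric.ball x₀ r)).toReal| ≤ t + c₃ := by
  intro x₀ r hr
  obtain ⟨s, ρ₁, ρ₂, h1F, h2F, hle, hdiff, hsub1, hsub2⟩ := hb x₀ r hr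
  have hρ₁ : 0 ≤ ρ₁ := hF _ h1F
  -- count monotonicity
  have cmono : ∀ {A B : Set X}, A ⊆ B → (countPts x A : ℝ) ≤ countPts x B := by
    intro A B h
    have : countPts x A ≤ countPts x B := by
      apply Nat.card_le_card_of_injective (fun i => (⟨i.1, h i.2⟩ : {i : Fin N // x i ∈ B}))
      intro a b hab
      exact Subtype.ext (by simpa using hab)
    exact_mod_cast this
  -- measure monotonicity (toReal)
  have mmono : ∀ {A B : Set X}, A ⊆ B → (μ A).toReal ≤ (μ B).toReal := by
    intro A B h
    exact ENNReal.toReal_mono (measure_ne_top μ B) (measure_mono h)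
  -- Lipschitz gap between the two approximating balls
  have gap : (N : ℝ) * (μ (Metric.ball s ρ₂)).toReal
      - (N : ℝ) * (μ (Metric.ball s ρ₁)).toReal ≤ c₃ := by
    have h1 := hlip s ρ₁ (ρ₂ - ρ₁) hρ₁ (by linarith)
    rw [add_sub_cancel] at h1
    have hN' : (1 : ℝ) ≤ N := by exact_mod_cast hN
    have hNpos : (0 : ℝ) < N := by linarith
    have : (N : ℝ) * ((μ (Metric.ball s ρ₂)).toReal - (μ (Metric.ball s ρ₁)).toReal)
        ≤ (N : ℝ) * (c₃ * (ρ₂ - ρ₁)) := by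
      exact mul_le_mul_of_nonneg_left h1 (le_of_lt hNpos)
    have h2 : (N : ℝ) * (c₃ * (ρ₂ - ρ₁)) ≤ c₃ := by
      have : (ρ₂ - ρ₁) ≤ 1 / N := hdiff
      have := mul_le_mul_of_nonneg_left this (le_of_lt hc₃)
      have h3 : (N : ℝ) * (c₃ * (ρ₂ - ρ₁)) ≤ (N : ℝ) * (c₃ * (1 / N)) := by
        exact mul_le_mul_of_nonneg_left this (le_of_lt hNpos)
      have h4 : (N : ℝ) * (c₃ * (1 / N)) = c₃ := by
        field_simp
      linarith
    linarith
  have ha1 := ha _ h1F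
  have ha2 := ha _ h2F
  simp only at ha1 ha2
  rw [abs_le] at ha1 ha2 ⊢
  constructor
  · have c1 := cmono hsub1
    have m1 := mmono hsub2
    have : (N : ℝ) * (μ (Metric.ball x₀ r)).toReal ≤ (N : ℝ) * (μ (Metric.ball s ρ₂)).toReal :=
      mul_le_mul_of_nonneg_left m1 (by positivity)
    nlinarith [ha1.1]
  · have c2 := cmono hsub2
    have m2 := mmono hsub1
    have : (N : ℝ) * (μ (Metric.ball s ρ₁)).toReal ≤ (N : ℝ) * (μ (Metric.ball x₀ r)).toReal :=
      mul_le_mul_of_nonneg_left m2 (by positivity)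
    nlinarith [ha2.2]
end

section
/- Let α > −1 and β ≥ −1/2 be real numbers and let C > 0. There exists a constant K > 0, depending only on α, β and C, such that the following holds for every integer L ≥ 2 and every a ∈ (0, π/2]. Let g : [0, π/2] → ℝ be a measurable function satisfying: |g(θ)| ≤ C·L^{α+1} for all θ ∈ [0, 1/L]; |g(θ)| ≤ C·L^{−1/2}·(sin θ)^{−α−3/2}·(cos θ)^{−β−1/2} for all θ ∈ [1/L, π/2 − 1/L]; and |g(θ)| ≤ C·L^{β} for all θ ∈ [π/2 − 1/L, π/2]. Then ∫₀^a ∫_{a−φ}^{π/2} g(θ)² · (sin θ)^{2α+1} · (cos θ)^{2β+1} dθ dφ ≤ K · L^{−1} · log L. -/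
open Real MeasureTheory intervalIntegral

set_option maxHeartbeats 1000000 in
/-- The key integral estimate in the variance bound for the harmonic ensemble, where `g`
plays the role of the Jacobi polynomial `P_L^{(α+1,β)}(cos 2θ)` and the three hypotheses
are the classical Szegő bounds in the three ranges of `θ`. -/
theorem harmonic_ensemble_variance_integral (α β C : ℝ) (hα : -1 < α) (hβ : -(1 / 2 : ℝ) ≤ β)
    (hC : 0 < C) :
    ∃ K > (0 : ℝ), ∀ L : ℕ, 2 ≤ L → ∀ a : ℝ, 0 < a → a ≤ π / 2 →
      ∀ g : ℝ → ℝ, Measurable g →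
      (∀ θ ∈ Set.Icc (0 : ℝ) (1 / L), |g θ| ≤ C * (L : ℝ) ^ (α + 1)) →
      (∀ θ ∈ Set.Icc (1 / (L : ℝ)) (π / 2 - 1 / L),
        |g θ| ≤ C * (L : ℝ) ^ (-(1 / 2 : ℝ)) * Real.sin θ ^ (-α - 3 / 2) *
          Real.cos θ ^ (-β - 1 / 2)) →
      (∀ θ ∈ Set.Icc (π / 2 - 1 / (L : ℝ)) (π / 2), |g θ| ≤ C * (L : ℝ) ^ β) →
      (∫ φ in (0 : ℝ)..a, ∫ θ in (a - φ)..(π / 2),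
          g θ ^ 2 * Real.sin θ ^ (2 * α + 1) * Real.cos θ ^ (2 * β + 1))
        ≤ K * (L : ℝ)⁻¹ * Real.log L := by
  have hπ : (0:ℝ) < π := Real.pi_pos
  have hπ3 : (3:ℝ) < π := Real.pi_gt_three
  have hπ4 : π ≤ 4 := Real.pi_le_four
  obtain ⟨c₁, hc₁def⟩ : ∃ x : ℝ, x = (2/π) ^ (2*α+1) + 1 := ⟨_, rfl⟩
  obtain ⟨c₂, hc₂def⟩ : ∃ x : ℝ, x = (2:ℝ) ^ (-(2*α+1)) + 1 := ⟨_, rfl⟩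
  have hc₁pos : 0 < c₁ := by
    have := Real.rpow_nonneg (show (0:ℝ) ≤ 2/π by positivity) (2*α+1)
    rw [hc₁def]; linarith
  have hc₂pos : 1 ≤ c₂ := by
    have := Real.rpow_nonneg (show (0:ℝ) ≤ 2 by norm_num) (-(2*α+1))
    rw [hc₂def]; linarith
  obtain ⟨E, hEdef⟩ : ∃ x : ℝ, x = c₂ * C^2 * π^2/4 := ⟨_, rfl⟩
  obtain ⟨A, hAdef⟩ : ∃ x : ℝ, x = c₁ * C^2/(2*α+2) + E := ⟨_, rfl⟩
  have hαe : (0:ℝ) < 2*α+2 := by linarith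
  have hEpos : 0 < E := by
    have h1 : (0:ℝ) < C^2 := pow_pos hC 2
    have h2 : (0:ℝ) < π^2 := pow_pos hπ 2
    have h3 : (0:ℝ) < C^2*π^2 := mul_pos h1 h2
    have h4 := mul_le_mul_of_nonneg_right hc₂pos h3.le
    rw [hEdef]; nlinarith
  have hApos : 0 < A := by
    have : 0 < c₁ * C^2/(2*α+2) := by positivity
    rw [hAdef]; linarith
  have hlog2 : 0 < Real.log 2 := Real.log_pos (by norm_num)
  refine ⟨(A + 2*E)/Real.log 2, div_pos (by linarith) hlog2, ?_⟩
  intro L hL a ha haπ g hgm hg₁ hg₂ hg₃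
  have hL2 : (2:ℝ) ≤ (L:ℝ) := by exact_mod_cast hL
  have hLpos : (0:ℝ) < L := by linarith
  have hLi : 0 < (1:ℝ)/(L:ℝ) := by positivity
  have hLi2 : (1:ℝ)/(L:ℝ) ≤ 1/2 := by
    rw [div_le_div_iff₀ hLpos (by norm_num)]; linarith
  have hLiπ : (1:ℝ)/(L:ℝ) < π/2 := by linarith
  have hπ20 : (0:ℝ) ≤ π/2 := by linarith
  -- the integrand
  obtain ⟨h, hhdef⟩ : ∃ h' : ℝ → ℝ,
      h' = fun θ => g θ ^ 2 * Real.sin θ ^ (2 * α + 1) * Real.cos θ ^ (2 * β + 1) := ⟨_, rfl⟩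
  -- the majorant
  obtain ⟨H, hHdef⟩ : ∃ H' : ℝ → ℝ,
      H' = fun θ => if θ ≤ 1/(L:ℝ) then c₁ * C^2 * (L:ℝ)^(2*α+2) * θ^(2*α+1)
        else (E/(L:ℝ)) * θ^(-2:ℝ) := ⟨_, rfl⟩
  -- nonnegativity of h on [0, π/2]
  have hnn : ∀ θ ∈ Set.Icc (0:ℝ) (π/2), 0 ≤ h θ := by
    rintro θ ⟨h0, hp⟩
    have hs : 0 ≤ Real.sin θ := Real.sin_nonneg_of_nonneg_of_le_pi h0 (by linarith)
    have hc : 0 ≤ Real.cos θ := Real.cos_nonneg_of_mem_Icc ⟨by linarith, hp⟩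
    simp only [hhdef]
    have := Real.rpow_nonneg hs (2*α+1)
    have := Real.rpow_nonneg hc (2*β+1)
    positivity
  -- nonnegativity of H on [0, π/2]
  have Hnn : ∀ θ ∈ Set.Icc (0:ℝ) (π/2), 0 ≤ H θ := by
    rintro θ ⟨h0, hp⟩
    simp only [hHdef]
    by_cases hb : θ ≤ 1/(L:ℝ)
    · rw [if_pos hb]
      have h1 := Real.rpow_nonneg h0 (2*α+1)
      have h2 := (Real.rpow_pos_of_pos hLpos (2*α+2)).le
      positivity
    · rw [if_neg hb]
      have h1 := Real.rpow_nonneg h0 (-2:ℝ)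
      positivity
  -- first sin bound
  have hsin₁ : ∀ θ ∈ Set.Icc (0:ℝ) (π/2), Real.sin θ ^ (2*α+1) ≤ c₁ * θ ^ (2*α+1) := by
    rintro θ ⟨h0, hp⟩
    have htnn : 0 ≤ θ^(2*α+1) := Real.rpow_nonneg h0 _
    rw [hc₁def]
    rcases le_or_gt 0 (2*α+1) with he | he
    · have h1 : Real.sin θ ^ (2*α+1) ≤ θ^(2*α+1) :=
        Real.rpow_le_rpow (Real.sin_nonneg_of_nonneg_of_le_pi h0 (by linarith)) (Real.sin_le h0) he
      have h3 : 0 ≤ (2/π)^(2*α+1) := Real.rpow_nonneg (by positivity) _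
      nlinarith
    · rcases eq_or_lt_of_le h0 with rfl | h0'
      · rw [Real.sin_zero, Real.zero_rpow (by intro h; rw [h] at he; simp at he)]
        positivity
      · have hs : 2/π * θ ≤ Real.sin θ := Real.mul_le_sin h0 hp
        have h1 : Real.sin θ ^ (2*α+1) ≤ (2/π*θ)^(2*α+1) :=
          Real.rpow_le_rpow_of_nonpos (by positivity) hs he.le
        rw [Real.mul_rpow (by positivity) h0] at h1
        have h3 : 0 ≤ (2/π)^(2*α+1) := Real.rpow_nonneg (by positivity) _
        nlinarith
  -- second sin bound (near π/2)
  have hsin₂ : ∀ θ : ℝ, π/2 - 1/(L:ℝ) ≤ θ → θ ≤ π/2 → Real.sin θ ^ (2*α+1) ≤ c₂ := by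
    intro θ hlb hub
    have hsin_lb : (1:ℝ)/2 ≤ Real.sin θ := by
      have h := Real.sin_le_sin_of_le_of_le_pi_div_two
        (by linarith : -(π/2) ≤ π/6) hub (by linarith : π/6 ≤ θ)
      rwa [Real.sin_pi_div_six] at h
    have hsnn : (0:ℝ) < Real.sin θ := by linarith
    rw [hc₂def]
    rcases le_or_gt 0 (2*α+1) with he | he
    · have h1 : Real.sin θ ^ (2*α+1) ≤ 1 :=
        Real.rpow_le_one hsnn.le (Real.sin_le_one θ) he
      have h3 : 0 ≤ (2:ℝ)^(-(2*α+1)) := Real.rpow_nonneg (by norm_num) _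
      linarith
    · have h1 : Real.sin θ ^ (2*α+1) ≤ ((1:ℝ)/2)^(2*α+1) :=
        Real.rpow_le_rpow_of_nonpos (by norm_num) hsin_lb he.le
      have h2 : ((1:ℝ)/2)^(2*α+1) = (2:ℝ)^(-(2*α+1)) := by
        rw [one_div, Real.inv_rpow (by norm_num), ← Real.rpow_neg (by norm_num)]
      rw [h2] at h1
      linarith
  -- squaring helper
  have hsq2 : ∀ w : ℝ, 0 < w → ∀ r : ℝ, (w^r)^2 = w^(2*r) := by
    intro w hw r
    rw [sq, ← Real.rpow_add hw, two_mul]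
  -- THE KEY POINTWISE BOUND
  have key : ∀ θ ∈ Set.Icc (0:ℝ) (π/2), h θ ≤ H θ := by
    rintro θ ⟨hθ0, hθπ⟩
    have hsnn : 0 ≤ Real.sin θ := Real.sin_nonneg_of_nonneg_of_le_pi hθ0 (by linarith)
    have hcnn : 0 ≤ Real.cos θ := Real.cos_nonneg_of_mem_Icc ⟨by linarith, hθπ⟩
    have hsinp : 0 ≤ Real.sin θ ^ (2*α+1) := Real.rpow_nonneg hsnn _
    have hcosp : 0 ≤ Real.cos θ ^ (2*β+1) := Real.rpow_nonneg hcnn _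
    simp only [hhdef, hHdef]
    by_cases hb : θ ≤ 1/(L:ℝ)
    · rw [if_pos hb]
      have hg1 := hg₁ θ ⟨hθ0, hb⟩
      have hsin := hsin₁ θ ⟨hθ0, hθπ⟩
      have hcos : Real.cos θ ^ (2*β+1) ≤ 1 :=
        Real.rpow_le_one hcnn (Real.cos_le_one θ) (by linarith)
      have hsq : g θ^2 ≤ C^2 * (L:ℝ)^(2*α+2) := by
        have h1 : g θ^2 ≤ (C * (L:ℝ)^(α+1))^2 := by
          rw [← sq_abs]; exact pow_le_pow_left₀ (abs_nonneg _) hg1 2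
        have h3 : (C * (L:ℝ)^(α+1))^2 = C^2 * (L:ℝ)^(2*α+2) := by
          rw [mul_pow, hsq2 _ hLpos, show 2*(α+1) = 2*α+2 by ring]
        linarith
      have hA2 : (0:ℝ) ≤ C^2 * (L:ℝ)^(2*α+2) := by
        have := (Real.rpow_pos_of_pos hLpos (2*α+2)).le; positivity
      have htnn : 0 ≤ θ^(2*α+1) := Real.rpow_nonneg hθ0 _
      calc g θ ^ 2 * Real.sin θ ^ (2 * α + 1) * Real.cos θ ^ (2 * β + 1)
          ≤ (C^2 * (L:ℝ)^(2*α+2)) * (c₁ * θ^(2*α+1)) * 1 := by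
            refine mul_le_mul (mul_le_mul hsq hsin hsinp hA2) hcos hcosp ?_
            exact mul_nonneg hA2 (mul_nonneg hc₁pos.le htnn)
        _ = c₁ * C^2 * (L:ℝ)^(2*α+2) * θ^(2*α+1) := by ring
    · rw [if_neg hb]
      push_neg at hb
      have hθpos : 0 < θ := lt_trans hLi hb
      have htinv : 0 ≤ θ^(-2:ℝ) := Real.rpow_nonneg hθ0 _
      by_cases hm : θ ≤ π/2 - 1/(L:ℝ)
      · -- middle region
        have hθlt : θ < π/2 := by linarith
        have hs : 0 < Real.sin θ := Real.sin_pos_of_pos_of_lt_pi hθpos (by linarith)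
        have hc : 0 < Real.cos θ := Real.cos_pos_of_mem_Ioo ⟨by linarith, hθlt⟩
        have hg2 := hg₂ θ ⟨hb.le, hm⟩
        have hsq : g θ^2 ≤ C^2 * (L:ℝ)⁻¹ * Real.sin θ^(2*(-α-3/2)) * Real.cos θ^(2*(-β-1/2)) := by
          have h1 : g θ^2 ≤ (C * (L:ℝ)^(-(1/2:ℝ)) * Real.sin θ^(-α-3/2) * Real.cos θ^(-β-1/2))^2 := by
            rw [← sq_abs]; exact pow_le_pow_left₀ (abs_nonneg _) hg2 2
          have h3 : (C * (L:ℝ)^(-(1/2:ℝ)) * Real.sin θ^(-α-3/2) * Real.cos θ^(-β-1/2))^2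
              = C^2 * (L:ℝ)⁻¹ * Real.sin θ^(2*(-α-3/2)) * Real.cos θ^(2*(-β-1/2)) := by
            have e1 : ((L:ℝ)^(-(1/2:ℝ)))^2 = (L:ℝ)⁻¹ := by
              rw [hsq2 _ hLpos, show 2*(-(1/2:ℝ)) = -1 by norm_num, Real.rpow_neg_one]
            have e2 := hsq2 _ hs (-α-3/2)
            have e3 := hsq2 _ hc (-β-1/2)
            calc (C * (L:ℝ)^(-(1/2:ℝ)) * Real.sin θ^(-α-3/2) * Real.cos θ^(-β-1/2))^2
                = C^2 * ((L:ℝ)^(-(1/2:ℝ)))^2 * (Real.sin θ^(-α-3/2))^2 * (Real.cos θ^(-β-1/2))^2 := by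
                  ring
              _ = C^2 * (L:ℝ)⁻¹ * Real.sin θ^(2*(-α-3/2)) * Real.cos θ^(2*(-β-1/2)) := by
                  rw [e1, e2, e3]
          linarith
        have step1 : g θ ^ 2 * Real.sin θ ^ (2 * α + 1) * Real.cos θ ^ (2 * β + 1)
            ≤ (C^2 * (L:ℝ)⁻¹ * Real.sin θ^(2*(-α-3/2)) * Real.cos θ^(2*(-β-1/2)))
              * Real.sin θ ^ (2*α+1) * Real.cos θ^(2*β+1) := by
          exact mul_le_mul_of_nonneg_right (mul_le_mul_of_nonneg_right hsq hsinp) hcosp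
        have step2 : (C^2 * (L:ℝ)⁻¹ * Real.sin θ^(2*(-α-3/2)) * Real.cos θ^(2*(-β-1/2)))
              * Real.sin θ ^ (2*α+1) * Real.cos θ^(2*β+1)
            = C^2 * (L:ℝ)⁻¹ * Real.sin θ^(-2:ℝ) := by
          have e1 : Real.sin θ^(2*(-α-3/2)) * Real.sin θ^(2*α+1) = Real.sin θ^(-2:ℝ) := by
            rw [← Real.rpow_add hs]; congr 1; ring
          have e2 : Real.cos θ^(2*(-β-1/2)) * Real.cos θ^(2*β+1) = 1 := by
            rw [← Real.rpow_add hc, show 2*(-β-1/2) + (2*β+1) = 0 by ring, Real.rpow_zero]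
          calc (C^2 * (L:ℝ)⁻¹ * Real.sin θ^(2*(-α-3/2)) * Real.cos θ^(2*(-β-1/2)))
              * Real.sin θ ^ (2*α+1) * Real.cos θ^(2*β+1)
              = C^2 * (L:ℝ)⁻¹ * (Real.sin θ^(2*(-α-3/2)) * Real.sin θ^(2*α+1))
                * (Real.cos θ^(2*(-β-1/2)) * Real.cos θ^(2*β+1)) := by ring
            _ = C^2 * (L:ℝ)⁻¹ * Real.sin θ^(-2:ℝ) := by rw [e1, e2, mul_one]
        have step3 : Real.sin θ^(-2:ℝ) ≤ (π^2/4) * θ^(-2:ℝ) := by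
          have hjor : 2/π * θ ≤ Real.sin θ := Real.mul_le_sin hθ0 hθπ
          have h4 : Real.sin θ^(-2:ℝ) ≤ (2/π*θ)^(-2:ℝ) :=
            Real.rpow_le_rpow_of_nonpos (by positivity) hjor (by norm_num)
          have h5 : (2/π*θ)^(-2:ℝ) = (π^2/4) * θ^(-2:ℝ) := by
            rw [Real.mul_rpow (by positivity) hθ0]
            have h6 : (2/π : ℝ)^(-2:ℝ) = π^2/4 := by
              rw [show (-2:ℝ) = -((2:ℕ):ℝ) by norm_num, Real.rpow_neg (by positivity),
                Real.rpow_natCast, div_pow, inv_div]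
              norm_num
            rw [h6]
          linarith
        have step4 : C^2 * (L:ℝ)⁻¹ * ((π^2/4) * θ^(-2:ℝ)) ≤ E/(L:ℝ) * θ^(-2:ℝ) := by
          have h7 : C^2*π^2/4 ≤ E := by
            have h3 : (0:ℝ) < C^2*π^2 := mul_pos (pow_pos hC 2) (pow_pos hπ 2)
            have h4 := mul_le_mul_of_nonneg_right hc₂pos h3.le
            rw [hEdef]; nlinarith
          have e1 : C^2 * (L:ℝ)⁻¹ * ((π^2/4) * θ^(-2:ℝ)) = (C^2*π^2/4) * ((L:ℝ)⁻¹ * θ^(-2:ℝ)) := by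
            ring
          have e2 : E/(L:ℝ) * θ^(-2:ℝ) = E * ((L:ℝ)⁻¹ * θ^(-2:ℝ)) := by ring
          have h12 : 0 ≤ (L:ℝ)⁻¹ * θ^(-2:ℝ) := by positivity
          rw [e1, e2]
          exact mul_le_mul_of_nonneg_right h7 h12
        have hCL : 0 ≤ C^2 * (L:ℝ)⁻¹ := by positivity
        calc g θ ^ 2 * Real.sin θ ^ (2 * α + 1) * Real.cos θ ^ (2 * β + 1)
            ≤ C^2 * (L:ℝ)⁻¹ * Real.sin θ^(-2:ℝ) := by rw [← step2]; exact step1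
          _ ≤ C^2 * (L:ℝ)⁻¹ * ((π^2/4) * θ^(-2:ℝ)) := mul_le_mul_of_nonneg_left step3 hCL
          _ ≤ E/(L:ℝ) * θ^(-2:ℝ) := step4
      · -- region near π/2
        push_neg at hm
        have hg3 := hg₃ θ ⟨hm.le, hθπ⟩
        have hsin3 : Real.sin θ ^ (2*α+1) ≤ c₂ := hsin₂ θ hm.le hθπ
        have hsq : g θ^2 ≤ C^2 * (L:ℝ)^(2*β) := by
          have h1 : g θ^2 ≤ (C * (L:ℝ)^β)^2 := by
            rw [← sq_abs]; exact pow_le_pow_left₀ (abs_nonneg _) hg3 2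
          have h3 : (C * (L:ℝ)^β)^2 = C^2 * (L:ℝ)^(2*β) := by
            rw [mul_pow, hsq2 _ hLpos]
          linarith
        have hcos3 : Real.cos θ ^ (2*β+1) ≤ (L:ℝ)^(-(2*β+1)) := by
          have h1 : Real.cos θ ≤ 1/(L:ℝ) := by
            have h2 : Real.cos θ ≤ Real.cos (π/2 - 1/(L:ℝ)) :=
              Real.cos_le_cos_of_nonneg_of_le_pi (by linarith) (by linarith) hm.le
            rw [Real.cos_pi_div_two_sub] at h2
            exact h2.trans (Real.sin_le hLi.le)
          have h4 := Real.rpow_le_rpow hcnn h1 (by linarith : (0:ℝ) ≤ 2*β+1)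
          rwa [one_div, Real.inv_rpow hLpos.le, ← Real.rpow_neg hLpos.le] at h4
        have hLb : 0 ≤ (L:ℝ)^(2*β) := (Real.rpow_pos_of_pos hLpos _).le
        have hLb2 : 0 ≤ (L:ℝ)^(-(2*β+1)) := (Real.rpow_pos_of_pos hLpos _).le
        have step1 : g θ ^ 2 * Real.sin θ ^ (2 * α + 1) * Real.cos θ ^ (2 * β + 1)
            ≤ (C^2 * (L:ℝ)^(2*β)) * c₂ * (L:ℝ)^(-(2*β+1)) := by
          have hc₂0 : (0:ℝ) ≤ c₂ := le_trans zero_le_one hc₂pos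
          have hb1 : (0:ℝ) ≤ C^2 * (L:ℝ)^(2*β) := mul_nonneg (sq_nonneg C) hLb
          exact mul_le_mul (mul_le_mul hsq hsin3 hsinp hb1) hcos3 hcosp
            (mul_nonneg hb1 hc₂0)
        have step2 : (C^2 * (L:ℝ)^(2*β)) * c₂ * (L:ℝ)^(-(2*β+1)) = c₂ * C^2 * (L:ℝ)⁻¹ := by
          have e1 : (L:ℝ)^(2*β) * (L:ℝ)^(-(2*β+1)) = (L:ℝ)⁻¹ := by
            rw [← Real.rpow_add hLpos, show 2*β + -(2*β+1) = -1 by ring, Real.rpow_neg_one]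
          calc (C^2 * (L:ℝ)^(2*β)) * c₂ * (L:ℝ)^(-(2*β+1))
              = c₂ * C^2 * ((L:ℝ)^(2*β) * (L:ℝ)^(-(2*β+1))) := by ring
            _ = c₂ * C^2 * (L:ℝ)⁻¹ := by rw [e1]
        have step3 : c₂ * C^2 * (L:ℝ)⁻¹ ≤ E/(L:ℝ) * θ^(-2:ℝ) := by
          have hθ2 : θ^(-2:ℝ) = (θ^2)⁻¹ := by
            rw [show (-2:ℝ) = -((2:ℕ):ℝ) by norm_num, Real.rpow_neg hθ0, Real.rpow_natCast]
          rw [hθ2]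
          have hθsq : (0:ℝ) < θ^2 := pow_pos hθpos 2
          have h8 : θ^2 ≤ π^2/4 := by nlinarith
          have h9 : (π^2/4 : ℝ)⁻¹ ≤ (θ^2)⁻¹ := by
            exact inv_anti₀ (by positivity) h8
          have h10 : E/(L:ℝ) * (π^2/4:ℝ)⁻¹ ≤ E/(L:ℝ) * (θ^2)⁻¹ :=
            mul_le_mul_of_nonneg_left h9 (by positivity)
          have hπne : π ≠ 0 := hπ.ne'
          have hLne : (L:ℝ) ≠ 0 := hLpos.ne'
          have h11 : E/(L:ℝ) * (π^2/4:ℝ)⁻¹ = c₂ * C^2 * (L:ℝ)⁻¹ := by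
            rw [hEdef]; field_simp
          linarith
        calc g θ ^ 2 * Real.sin θ ^ (2 * α + 1) * Real.cos θ ^ (2 * β + 1)
            ≤ (C^2 * (L:ℝ)^(2*β)) * c₂ * (L:ℝ)^(-(2*β+1)) := step1
          _ = c₂ * C^2 * (L:ℝ)⁻¹ := step2
          _ ≤ E/(L:ℝ) * θ^(-2:ℝ) := step3
  -- integrability of the majorant
  have HI1 : IntervalIntegrable H volume 0 (1/(L:ℝ)) := by
    have base : IntervalIntegrable (fun θ : ℝ => c₁*C^2*(L:ℝ)^(2*α+2) * θ^(2*α+1))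
        volume 0 (1/(L:ℝ)) :=
      (intervalIntegral.intervalIntegrable_rpow' (by linarith)).const_mul _
    rw [intervalIntegrable_iff] at base ⊢
    apply base.congr_fun _ measurableSet_uIoc
    intro x hx
    rw [Set.uIoc_of_le hLi.le] at hx
    simp only [hHdef]
    rw [if_pos hx.2]
  have HI2 : IntervalIntegrable H volume (1/(L:ℝ)) (π/2) := by
    have hnm : (0:ℝ) ∉ Set.uIcc (1/(L:ℝ)) (π/2) := Set.notMem_uIcc_of_lt hLi (by linarith)
    have base : IntervalIntegrable (fun θ : ℝ => (E/(L:ℝ)) * θ^(-2:ℝ))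
        volume (1/(L:ℝ)) (π/2) :=
      (intervalIntegral.intervalIntegrable_rpow (Or.inr hnm)).const_mul _
    rw [intervalIntegrable_iff] at base ⊢
    apply base.congr_fun _ measurableSet_uIoc
    intro x hx
    rw [Set.uIoc_of_le hLiπ.le] at hx
    simp only [hHdef]
    rw [if_neg (not_le.mpr hx.1)]
  have HI : IntervalIntegrable H volume 0 (π/2) := HI1.trans HI2
  have HIsub : ∀ x y : ℝ, x ∈ Set.Icc (0:ℝ) (π/2) → y ∈ Set.Icc (0:ℝ) (π/2) →
      IntervalIntegrable H volume x y := by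
    intro x y hx hy
    have hx' : x ∈ Set.uIcc (0:ℝ) (π/2) := by rw [Set.uIcc_of_le hπ20]; exact hx
    have hy' : y ∈ Set.uIcc (0:ℝ) (π/2) := by rw [Set.uIcc_of_le hπ20]; exact hy
    exact HI.mono_set (Set.uIcc_subset_uIcc hx' hy')
  -- integrability of h
  have hmeas : Measurable h := by
    rw [hhdef]
    exact ((hgm.pow_const 2).mul (Real.measurable_sin.pow_const _)).mul
      (Real.measurable_cos.pow_const _)
  have hIole : Set.uIoc (0:ℝ) (π/2) = Set.Ioc 0 (π/2) := Set.uIoc_of_le hπ20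
  have hint : IntervalIntegrable h volume 0 (π/2) := by
    rw [intervalIntegrable_iff, hIole]
    have HIon : IntegrableOn H (Set.Ioc (0:ℝ) (π/2)) volume := by
      have h2 := HI; rwa [intervalIntegrable_iff, hIole] at h2
    apply Integrable.mono' HIon hmeas.aestronglyMeasurable
    filter_upwards [ae_restrict_mem measurableSet_Ioc] with x hx
    have hx' : x ∈ Set.Icc (0:ℝ) (π/2) := Set.Ioc_subset_Icc_self hx
    rw [Real.norm_eq_abs, abs_of_nonneg (hnn x hx')]
    exact key x hx'
  have hIsub : ∀ x y : ℝ, x ∈ Set.Icc (0:ℝ) (π/2) → y ∈ Set.Icc (0:ℝ) (π/2) →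
      IntervalIntegrable h volume x y := by
    intro x y hx hy
    have hx' : x ∈ Set.uIcc (0:ℝ) (π/2) := by rw [Set.uIcc_of_le hπ20]; exact hx
    have hy' : y ∈ Set.uIcc (0:ℝ) (π/2) := by rw [Set.uIcc_of_le hπ20]; exact hy
    exact hint.mono_set (Set.uIcc_subset_uIcc hx' hy')
  -- the tail integral of the majorant
  obtain ⟨JH, hJHdef⟩ : ∃ J : ℝ → ℝ, J = fun t => ∫ θ in t..(π/2), H θ := ⟨_, rfl⟩
  have hπmem : (π/2 : ℝ) ∈ Set.Icc (0:ℝ) (π/2) := ⟨hπ20, le_refl _⟩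
  have JH_anti : ∀ x y : ℝ, x ∈ Set.Icc (0:ℝ) (π/2) → y ∈ Set.Icc (0:ℝ) (π/2) → x ≤ y →
      JH y ≤ JH x := by
    intro x y hx hy hxy
    have h1 : JH x = (∫ θ in x..y, H θ) + JH y := by
      rw [hJHdef]
      exact (integral_add_adjacent_intervals (HIsub x y hx hy) (HIsub y (π/2) hy hπmem)).symm
    have h2 : 0 ≤ ∫ θ in x..y, H θ :=
      intervalIntegral.integral_nonneg hxy
        (fun u hu => Hnn u ⟨le_trans hx.1 hu.1, le_trans hu.2 hy.2⟩)
    linarith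
  have hexp : 2*α+1+1 = 2*α+2 := by ring
  have JH0 : JH 0 ≤ A := by
    have hsplit : JH 0 = (∫ θ in (0:ℝ)..(1/(L:ℝ)), H θ) + ∫ θ in (1/(L:ℝ))..(π/2), H θ := by
      rw [hJHdef]; exact (integral_add_adjacent_intervals HI1 HI2).symm
    have p1 : (∫ θ in (0:ℝ)..(1/(L:ℝ)), H θ) = c₁*C^2/(2*α+2) := by
      have e0 : (∫ θ in (0:ℝ)..(1/(L:ℝ)), H θ)
          = ∫ θ in (0:ℝ)..(1/(L:ℝ)), c₁*C^2*(L:ℝ)^(2*α+2) * θ^(2*α+1) := by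
        apply integral_congr
        intro x hx
        rw [Set.uIcc_of_le hLi.le] at hx
        simp only [hHdef]
        rw [if_pos hx.2]
      rw [e0, intervalIntegral.integral_const_mul,
        integral_rpow (Or.inl (by linarith : (-1:ℝ) < 2*α+1)), hexp,
        Real.zero_rpow hαe.ne']
      have e1 : ((1:ℝ)/(L:ℝ))^(2*α+2) = ((L:ℝ)^(2*α+2))⁻¹ := by
        rw [one_div, Real.inv_rpow hLpos.le]
      rw [e1]
      have hLne : (L:ℝ)^(2*α+2) ≠ 0 := (Real.rpow_pos_of_pos hLpos _).ne'
      have h2α : (2*α+2 : ℝ) ≠ 0 := hαe.ne'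
      field_simp
      ring
    have p2 : (∫ θ in (1/(L:ℝ))..(π/2), H θ) ≤ E := by
      have e0 : (∫ θ in (1/(L:ℝ))..(π/2), H θ)
          = (E/(L:ℝ)) * ∫ θ in (1/(L:ℝ))..(π/2), θ^(-2:ℝ) := by
        rw [← intervalIntegral.integral_const_mul]
        apply intervalIntegral.integral_congr_ae
        apply Filter.Eventually.of_forall
        intro x hx
        rw [Set.uIoc_of_le hLiπ.le] at hx
        simp only [hHdef]
        rw [if_neg (not_le.mpr hx.1)]
      have hnm : (0:ℝ) ∉ Set.uIcc (1/(L:ℝ)) (π/2) := Set.notMem_uIcc_of_lt hLi (by linarith)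
      have e1 : (∫ θ in (1/(L:ℝ))..(π/2), θ^(-2:ℝ)) = (L:ℝ) - 2/π := by
        rw [integral_rpow (Or.inr ⟨by norm_num, hnm⟩)]
        rw [show (-2:ℝ)+1 = -1 by norm_num, Real.rpow_neg_one, Real.rpow_neg_one,
          one_div, inv_inv, inv_div]
        ring
      rw [e0, e1]
      have h1 : (E/(L:ℝ)) * ((L:ℝ) - 2/π) ≤ (E/(L:ℝ)) * (L:ℝ) := by
        apply mul_le_mul_of_nonneg_left _ (div_nonneg hEpos.le hLpos.le)
        have h9 : 0 < 2/π := by positivity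
        linarith
      have h2 : (E/(L:ℝ)) * (L:ℝ) = E := div_mul_cancel₀ E hLpos.ne'
      linarith
    rw [hAdef, hsplit, p1]
    linarith
  have JHA : ∀ t ∈ Set.Icc (0:ℝ) (π/2), JH t ≤ A :=
    fun t ht => le_trans (JH_anti 0 t ⟨le_refl 0, hπ20⟩ ht ht.1) JH0
  have JHtail : ∀ t : ℝ, 1/(L:ℝ) ≤ t → t ≤ π/2 → JH t ≤ (E/(L:ℝ)) * t⁻¹ := by
    intro t ht1 ht2
    have htpos : 0 < t := lt_of_lt_of_le hLi ht1
    have e0 : JH t = (E/(L:ℝ)) * ∫ θ in t..(π/2), θ^(-2:ℝ) := by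
      rw [hJHdef, ← intervalIntegral.integral_const_mul]
      apply intervalIntegral.integral_congr_ae
      apply Filter.Eventually.of_forall
      intro x hx
      rw [Set.uIoc_of_le ht2] at hx
      simp only [hHdef]
      rw [if_neg (not_le.mpr (lt_of_le_of_lt ht1 hx.1))]
    have hnm : (0:ℝ) ∉ Set.uIcc t (π/2) := Set.notMem_uIcc_of_lt htpos (by linarith)
    have e1 : (∫ θ in t..(π/2), θ^(-2:ℝ)) = t⁻¹ - 2/π := by
      rw [integral_rpow (Or.inr ⟨by norm_num, hnm⟩)]
      rw [show (-2:ℝ)+1 = -1 by norm_num, Real.rpow_neg_one, Real.rpow_neg_one, inv_div]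
      ring
    rw [e0, e1]
    apply mul_le_mul_of_nonneg_left _ (div_nonneg hEpos.le hLpos.le)
    have h9 : 0 < 2/π := by positivity
    linarith
  have JHII : ∀ x y : ℝ, x ∈ Set.Icc (0:ℝ) (π/2) → y ∈ Set.Icc (0:ℝ) (π/2) →
      IntervalIntegrable JH volume x y := by
    intro x y hx hy
    apply AntitoneOn.intervalIntegrable
    intro u hu v hv huv
    have hx' : x ∈ Set.uIcc (0:ℝ) (π/2) := by rw [Set.uIcc_of_le hπ20]; exact hx
    have hy' : y ∈ Set.uIcc (0:ℝ) (π/2) := by rw [Set.uIcc_of_le hπ20]; exact hy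
    have hsub := Set.uIcc_subset_uIcc hx' hy'
    rw [Set.uIcc_of_le hπ20] at hsub
    exact JH_anti u v (hsub hu) (hsub hv) huv
  -- outer comparison
  have amem : a ∈ Set.Icc (0:ℝ) (π/2) := ⟨ha.le, haπ⟩
  have hsubmem : ∀ φ ∈ Set.Icc (0:ℝ) a, a - φ ∈ Set.Icc (0:ℝ) (π/2) :=
    fun φ hφ => ⟨by linarith [hφ.2], by linarith [hφ.1]⟩
  have F_le : ∀ φ ∈ Set.Icc (0:ℝ) a, (∫ θ in (a-φ)..(π/2), h θ) ≤ JH (a-φ) := by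
    intro φ hφ
    have hm := hsubmem φ hφ
    rw [hJHdef]
    apply integral_mono_on hm.2 (hIsub _ _ hm hπmem) (HIsub _ _ hm hπmem)
    intro x hx
    exact key x ⟨le_trans hm.1 hx.1, hx.2⟩
  have F_mono : MonotoneOn (fun φ => ∫ θ in (a-φ)..(π/2), h θ) (Set.uIcc 0 a) := by
    rw [Set.uIcc_of_le ha.le]
    intro x hx y hy hxy
    have hmx := hsubmem x hx
    have hmy := hsubmem y hy
    have h1 : (∫ θ in (a-y)..(π/2), h θ)
        = (∫ θ in (a-y)..(a-x), h θ) + ∫ θ in (a-x)..(π/2), h θ :=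
      (integral_add_adjacent_intervals (hIsub _ _ hmy hmx) (hIsub _ _ hmx hπmem)).symm
    have h2 : 0 ≤ ∫ θ in (a-y)..(a-x), h θ :=
      intervalIntegral.integral_nonneg (by linarith)
        (fun u hu => hnn u ⟨le_trans hmy.1 hu.1, le_trans hu.2 hmx.2⟩)
    show (∫ θ in (a-x)..(π/2), h θ) ≤ ∫ θ in (a-y)..(π/2), h θ
    linarith
  have G_mono : MonotoneOn (fun φ => JH (a-φ)) (Set.uIcc 0 a) := by
    rw [Set.uIcc_of_le ha.le]
    intro x hx y hy hxy
    exact JH_anti (a-y) (a-x) (hsubmem y hy) (hsubmem x hx) (by linarith)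
  have outer1 : (∫ φ in (0:ℝ)..a, ∫ θ in (a-φ)..(π/2), h θ) ≤ ∫ φ in (0:ℝ)..a, JH (a-φ) := by
    apply integral_mono_on ha.le F_mono.intervalIntegrable G_mono.intervalIntegrable
    intro φ hφ; exact F_le φ hφ
  have outer2 : (∫ φ in (0:ℝ)..a, JH (a-φ)) = ∫ t in (0:ℝ)..a, JH t := by
    have h9 := intervalIntegral.integral_comp_sub_left (a := 0) (b := a) JH a
    simpa using h9
  -- bounding the outer integral
  have hlogL : Real.log 2 ≤ Real.log (L:ℝ) := Real.log_le_log (by norm_num) hL2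
  have hlogL0 : 0 ≤ Real.log (L:ℝ) := le_trans hlog2.le hlogL
  have Tbound : (∫ t in (0:ℝ)..a, JH t) ≤ A/(L:ℝ) + (E/(L:ℝ))*(Real.log L + 1) := by
    have hEL : 0 ≤ (E/(L:ℝ))*(Real.log L + 1) := by
      apply mul_nonneg (div_nonneg hEpos.le hLpos.le); linarith
    rcases le_or_gt a (1/(L:ℝ)) with hcase | hcase
    · have h1 : (∫ t in (0:ℝ)..a, JH t) ≤ ∫ t in (0:ℝ)..a, A := by
        apply integral_mono_on ha.le (JHII 0 a ⟨le_refl 0, hπ20⟩ amem) intervalIntegrable_const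
        intro t ht
        exact JHA t ⟨ht.1, by linarith [ht.2]⟩
      rw [intervalIntegral.integral_const, smul_eq_mul, sub_zero] at h1
      have h2 : a * A ≤ (1/(L:ℝ)) * A := mul_le_mul_of_nonneg_right hcase hApos.le
      have h3 : (1/(L:ℝ)) * A = A/(L:ℝ) := by ring
      linarith
    · have mem1L : (1/(L:ℝ)) ∈ Set.Icc (0:ℝ) (π/2) := ⟨hLi.le, hLiπ.le⟩
      have hsplit : (∫ t in (0:ℝ)..a, JH t)
          = (∫ t in (0:ℝ)..(1/(L:ℝ)), JH t) + ∫ t in (1/(L:ℝ))..a, JH t :=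
        (integral_add_adjacent_intervals (JHII 0 (1/(L:ℝ)) ⟨le_refl 0, hπ20⟩ mem1L)
          (JHII (1/(L:ℝ)) a mem1L amem)).symm
      have piece1 : (∫ t in (0:ℝ)..(1/(L:ℝ)), JH t) ≤ A/(L:ℝ) := by
        have h1 : (∫ t in (0:ℝ)..(1/(L:ℝ)), JH t) ≤ ∫ t in (0:ℝ)..(1/(L:ℝ)), A := by
          apply integral_mono_on hLi.le (JHII 0 (1/(L:ℝ)) ⟨le_refl 0, hπ20⟩ mem1L)
            intervalIntegrable_const
          intro t ht
          exact JHA t ⟨ht.1, by linarith [ht.2]⟩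
        rw [intervalIntegral.integral_const, smul_eq_mul, sub_zero] at h1
        have h3 : (1/(L:ℝ)) * A = A/(L:ℝ) := by ring
        linarith
      have piece2 : (∫ t in (1/(L:ℝ))..a, JH t) ≤ (E/(L:ℝ))*(Real.log L + 1) := by
        have hinv_int : IntervalIntegrable (fun t : ℝ => (E/(L:ℝ)) * t⁻¹)
            volume (1/(L:ℝ)) a := by
          apply ContinuousOn.intervalIntegrable
          apply ContinuousOn.mul continuousOn_const
          apply ContinuousOn.inv₀ continuousOn_id
          intro x hx
          rw [Set.uIcc_of_le hcase.le] at hx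
          exact (lt_of_lt_of_le hLi hx.1).ne'
        have h1 : (∫ t in (1/(L:ℝ))..a, JH t) ≤ ∫ t in (1/(L:ℝ))..a, (E/(L:ℝ)) * t⁻¹ := by
          apply integral_mono_on hcase.le (JHII (1/(L:ℝ)) a mem1L amem) hinv_int
          intro t ht
          exact JHtail t ht.1 (le_trans ht.2 haπ)
        have hnm : (0:ℝ) ∉ Set.uIcc (1/(L:ℝ)) a := Set.notMem_uIcc_of_lt hLi ha
        have h2 : (∫ t in (1/(L:ℝ))..a, (E/(L:ℝ)) * t⁻¹) = (E/(L:ℝ)) * Real.log (a * L) := by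
          rw [intervalIntegral.integral_const_mul, integral_inv hnm]
          congr 1
          rw [div_eq_mul_inv, one_div, inv_inv]
        have h3 : Real.log (a * L) ≤ Real.log L + 1 := by
          have h4 : Real.log (a*(L:ℝ)) ≤ Real.log (π/2*(L:ℝ)) := by
            apply Real.log_le_log (mul_pos ha hLpos)
            exact mul_le_mul_of_nonneg_right haπ hLpos.le
          have h5 : Real.log (π/2*(L:ℝ)) = Real.log (π/2) + Real.log L :=
            Real.log_mul (by positivity) hLpos.ne'
          have h6 : Real.log (π/2) ≤ π/2 - 1 := Real.log_le_sub_one_of_pos (by positivity)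
          linarith
        have h7 : (E/(L:ℝ)) * Real.log (a*L) ≤ (E/(L:ℝ)) * (Real.log L + 1) :=
          mul_le_mul_of_nonneg_left h3 (div_nonneg hEpos.le hLpos.le)
        linarith
      linarith
  -- final arithmetic
  have final : A/(L:ℝ) + (E/(L:ℝ))*(Real.log L + 1)
      ≤ (A + 2*E)/Real.log 2 * (L:ℝ)⁻¹ * Real.log L := by
    have key2 : (A + E*(Real.log L + 1)) * Real.log 2 ≤ (A + 2*E) * Real.log L := by
      nlinarith [mul_le_mul_of_nonneg_left hlogL hApos.le,
        mul_le_mul_of_nonneg_left hlogL hEpos.le, hlog2, hlogL0,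
        mul_nonneg hEpos.le hlogL0,
        Real.log_le_sub_one_of_pos (show (0:ℝ) < 2 by norm_num)]
    have e1 : A/(L:ℝ) + (E/(L:ℝ))*(Real.log L + 1) = (A + E*(Real.log L + 1)) * (L:ℝ)⁻¹ := by
      ring
    have e2 : (A + 2*E)/Real.log 2 * (L:ℝ)⁻¹ * Real.log L
        = ((A + 2*E) * Real.log L / Real.log 2) * (L:ℝ)⁻¹ := by ring
    rw [e1, e2]
    apply mul_le_mul_of_nonneg_right _ (inv_nonneg.mpr hLpos.le)
    rw [le_div_iff₀ hlog2]
    exact key2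
  calc (∫ φ in (0:ℝ)..a, ∫ θ in (a-φ)..(π/2),
          g θ ^ 2 * Real.sin θ ^ (2 * α + 1) * Real.cos θ ^ (2 * β + 1))
      = ∫ φ in (0:ℝ)..a, ∫ θ in (a-φ)..(π/2), h θ := by simp only [hhdef]
    _ ≤ ∫ φ in (0:ℝ)..a, JH (a-φ) := outer1
    _ = ∫ t in (0:ℝ)..a, JH t := outer2
    _ ≤ A/(L:ℝ) + (E/(L:ℝ))*(Real.log L + 1) := Tbound
    _ ≤ (A + 2*E)/Real.log 2 * (L:ℝ)⁻¹ * Real.log L := final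
end

section
/- Let β ≥ −1/2 be a real number, let α be a real number, and let C > 0. There exists a constant K > 0, depending only on β and C, such that for every integer L ≥ 2, every a ∈ (0, π/2], and every measurable g : [0, π/2] → ℝ satisfying |g(θ)| ≤ C·L^{β} for all θ ∈ [π/2 − 1/L, π/2], one has ∫₀^a ∫_{max(π/2 − 1/L, a−φ)}^{π/2} g(θ)² · (sin θ)^{2α+1} · (cos θ)^{2β+1} dθ dφ ≤ K · L^{−2}. -/
open Real MeasureTheory intervalIntegral

/-- The estimate over the region `R₁` in the variance bound for the harmonic ensemble, where
`g` plays the role of the Jacobi polynomial `P_L^{(α+1,β)}(cos 2θ)` and the hypothesis is the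
Szegő bound near `θ = π/2`. -/
theorem harmonic_ensemble_region_R1 (β α C : ℝ) (hβ : -(1 / 2 : ℝ) ≤ β) (hC : 0 < C) :
    ∃ K > (0 : ℝ), ∀ L : ℕ, 2 ≤ L → ∀ a : ℝ, 0 < a → a ≤ π / 2 →
      ∀ g : ℝ → ℝ, Measurable g →
      (∀ θ ∈ Set.Icc (π / 2 - 1 / (L : ℝ)) (π / 2), |g θ| ≤ C * (L : ℝ) ^ β) →
      (∫ φ in (0 : ℝ)..a, ∫ θ in (max (π / 2 - 1 / L) (a - φ))..(π / 2),
          g θ ^ 2 * Real.sin θ ^ (2 * α + 1) * Real.cos θ ^ (2 * β + 1))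
        ≤ K * ((L : ℝ) ^ 2)⁻¹ := by
  have hπ := Real.pi_gt_three
  set M : ℝ := max 1 (Real.cos 2⁻¹ ^ (2 * α + 1)) with hMdef
  have hM1 : (1 : ℝ) ≤ M := le_max_left _ _
  refine ⟨π / 2 * C ^ 2 * M, mul_pos (mul_pos (by linarith) (pow_pos hC 2)) (lt_of_lt_of_le one_pos hM1), ?_⟩
  intro L hL a ha0 haπ g hg hgb
  have hL0 : (0 : ℝ) < (L : ℝ) := by positivity
  have hL2 : (2 : ℝ) ≤ (L : ℝ) := by exact_mod_cast hL
  have hLinv : (1 : ℝ) / L ≤ 1 / 2 := by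
    apply div_le_div_of_nonneg_left <;> linarith
  have hLinv0 : (0 : ℝ) < 1 / L := by positivity
  have hcoshalf : (0 : ℝ) < Real.cos 2⁻¹ := by
    apply Real.cos_pos_of_mem_Ioo
    constructor <;> [linarith; linarith]
  -- the pointwise bound constant
  set B : ℝ := (C * (L : ℝ) ^ β) ^ 2 * M * ((L : ℝ)⁻¹) ^ (2 * β + 1) with hBdef
  have hβ' : (0 : ℝ) ≤ 2 * β + 1 := by linarith
  -- pointwise bound on the inner integrand
  have hpt : ∀ θ ∈ Set.Icc (π / 2 - 1 / L) (π / 2),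
      ‖g θ ^ 2 * Real.sin θ ^ (2 * α + 1) * Real.cos θ ^ (2 * β + 1)‖ ≤ B := by
    intro θ hθ
    obtain ⟨hθ1, hθ2⟩ := hθ
    have hθ0 : (0 : ℝ) ≤ θ := by linarith
    have hsin0 : 0 ≤ Real.sin θ := Real.sin_nonneg_of_nonneg_of_le_pi hθ0 (by linarith)
    have hcos0 : 0 ≤ Real.cos θ := Real.cos_nonneg_of_mem_Icc ⟨by linarith, hθ2⟩
    have hcosb : Real.cos θ ≤ (L : ℝ)⁻¹ := by
      have h1 : Real.cos θ ≤ Real.cos (π / 2 - 1 / L) :=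
        Real.cos_le_cos_of_nonneg_of_le_pi (by linarith) (by linarith) hθ1
      have h2 : Real.cos (π / 2 - 1 / L) = Real.sin (1 / L) := Real.cos_pi_div_two_sub _
      have h3 : Real.sin (1 / L) ≤ 1 / L := Real.sin_le hLinv0.le
      rw [h2] at h1
      calc Real.cos θ ≤ 1 / L := le_trans h1 h3
        _ = (L : ℝ)⁻¹ := one_div _
    have hsinl : Real.cos 2⁻¹ ≤ Real.sin θ := by
      have := Real.cos_pi_div_two_sub θ
      rw [← this]
      apply Real.cos_le_cos_of_nonneg_of_le_pi (by linarith) (by linarith) (by linarith)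
    have hsinb : Real.sin θ ^ (2 * α + 1) ≤ M := by
      rcases le_or_gt 0 (2 * α + 1) with he | he
      · exact le_trans (Real.rpow_le_one hsin0 (Real.sin_le_one θ) he) hM1
      · exact le_trans (Real.rpow_le_rpow_of_nonpos hcoshalf hsinl he.le) (le_max_right _ _)
    have hg2 : g θ ^ 2 ≤ (C * (L : ℝ) ^ β) ^ 2 := by
      have := hgb θ ⟨hθ1, hθ2⟩
      nlinarith [abs_nonneg (g θ), sq_abs (g θ)]
    have hcosr : Real.cos θ ^ (2 * β + 1) ≤ ((L : ℝ)⁻¹) ^ (2 * β + 1) :=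
      Real.rpow_le_rpow hcos0 hcosb hβ'
    have h0s : 0 ≤ Real.sin θ ^ (2 * α + 1) := Real.rpow_nonneg hsin0 _
    have h0c : 0 ≤ Real.cos θ ^ (2 * β + 1) := Real.rpow_nonneg hcos0 _
    have h0i : 0 ≤ ((L : ℝ)⁻¹) ^ (2 * β + 1) := Real.rpow_nonneg (by positivity) _
    rw [norm_eq_abs, abs_of_nonneg (by positivity)]
    calc g θ ^ 2 * Real.sin θ ^ (2 * α + 1) * Real.cos θ ^ (2 * β + 1)
        ≤ (C * (L : ℝ) ^ β) ^ 2 * M * ((L : ℝ)⁻¹) ^ (2 * β + 1) := by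
          apply mul_le_mul
          · apply mul_le_mul hg2 hsinb h0s (by positivity)
          · exact hcosr
          · exact h0c
          · positivity
      _ = B := rfl
  -- value of B
  have hBval : B = C ^ 2 * M * (L : ℝ)⁻¹ := by
    have h1 : ((L : ℝ)⁻¹) ^ (2 * β + 1) = ((L : ℝ) ^ (2 * β + 1))⁻¹ :=
      Real.inv_rpow hL0.le _
    have h2 : ((L : ℝ) ^ β) ^ 2 = (L : ℝ) ^ (β * 2) := by
      rw [← Real.rpow_natCast ((L : ℝ) ^ β) 2, ← Real.rpow_mul hL0.le]
      norm_num
    have h3 : (L : ℝ) ^ (β * 2) * ((L : ℝ) ^ (2 * β + 1))⁻¹ = (L : ℝ)⁻¹ := by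
      rw [← Real.rpow_neg hL0.le, ← Real.rpow_add hL0]
      have : β * 2 + -(2 * β + 1) = -1 := by ring
      rw [this, Real.rpow_neg_one]
    rw [hBdef, mul_pow, h1, h2]
    calc C ^ 2 * (L : ℝ) ^ (β * 2) * M * ((L : ℝ) ^ (2 * β + 1))⁻¹
        = C ^ 2 * M * ((L : ℝ) ^ (β * 2) * ((L : ℝ) ^ (2 * β + 1))⁻¹) := by ring
      _ = C ^ 2 * M * (L : ℝ)⁻¹ := by rw [h3]
  -- bound on the inner integral
  have hinner : ∀ φ ∈ Set.uIoc (0 : ℝ) a,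
      ‖∫ θ in (max (π / 2 - 1 / L) (a - φ))..(π / 2),
          g θ ^ 2 * Real.sin θ ^ (2 * α + 1) * Real.cos θ ^ (2 * β + 1)‖
        ≤ C ^ 2 * M * ((L : ℝ) ^ 2)⁻¹ := by
    intro φ hφ
    rw [Set.uIoc_of_le ha0.le] at hφ
    set m : ℝ := max (π / 2 - 1 / L) (a - φ) with hmdef
    have hm1 : π / 2 - 1 / L ≤ m := le_max_left _ _
    have hm2 : m ≤ π / 2 := max_le (by linarith) (by linarith [hφ.1])
    have key : ‖∫ θ in m..(π / 2),
          g θ ^ 2 * Real.sin θ ^ (2 * α + 1) * Real.cos θ ^ (2 * β + 1)‖ ≤ B * |π / 2 - m| := by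
      apply intervalIntegral.norm_integral_le_of_norm_le_const
      intro θ hθ
      rw [Set.uIoc_of_le hm2] at hθ
      exact hpt θ ⟨by linarith [hθ.1], hθ.2⟩
    have hBpos : 0 ≤ B := by
      rw [hBval]; positivity
    calc ‖∫ θ in m..(π / 2), g θ ^ 2 * Real.sin θ ^ (2 * α + 1) * Real.cos θ ^ (2 * β + 1)‖
        ≤ B * |π / 2 - m| := key
      _ ≤ B * (1 / L) := by
          apply mul_le_mul_of_nonneg_left _ hBpos
          rw [abs_of_nonneg (by linarith)]
          linarith
      _ = C ^ 2 * M * ((L : ℝ) ^ 2)⁻¹ := by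
          rw [hBval]; field_simp
  -- conclude
  have houter : ‖∫ φ in (0 : ℝ)..a, ∫ θ in (max (π / 2 - 1 / L) (a - φ))..(π / 2),
        g θ ^ 2 * Real.sin θ ^ (2 * α + 1) * Real.cos θ ^ (2 * β + 1)‖
      ≤ C ^ 2 * M * ((L : ℝ) ^ 2)⁻¹ * |a - 0| :=
    intervalIntegral.norm_integral_le_of_norm_le_const hinner
  have habs : |a - 0| ≤ π / 2 := by
    rw [abs_of_nonneg (by linarith)]; linarith
  calc (∫ φ in (0 : ℝ)..a, ∫ θ in (max (π / 2 - 1 / L) (a - φ))..(π / 2),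
        g θ ^ 2 * Real.sin θ ^ (2 * α + 1) * Real.cos θ ^ (2 * β + 1))
      ≤ ‖∫ φ in (0 : ℝ)..a, ∫ θ in (max (π / 2 - 1 / L) (a - φ))..(π / 2),
        g θ ^ 2 * Real.sin θ ^ (2 * α + 1) * Real.cos θ ^ (2 * β + 1)‖ := le_norm_self _
    _ ≤ C ^ 2 * M * ((L : ℝ) ^ 2)⁻¹ * |a - 0| := houter
    _ ≤ C ^ 2 * M * ((L : ℝ) ^ 2)⁻¹ * (π / 2) := by
        apply mul_le_mul_of_nonneg_left habs (by positivity)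
    _ = π / 2 * C ^ 2 * M * ((L : ℝ) ^ 2)⁻¹ := by ring
end

section
/- Let α, β be real numbers and let C > 0. There exists a constant K > 0, depending only on C, such that the following holds for every integer L ≥ 2 and every a ∈ (0, π/2] with a > 1/L. Let g : [0, π/2] → ℝ be measurable with |g(θ)| ≤ C·L^{−1/2}·(sin θ)^{−α−3/2}·(cos θ)^{−β−1/2} for all θ ∈ [1/L, π/2 − 1/L]. Then ∫_{max(0, a−π/2+1/L)}^{a−1/L} ∫_{a−φ}^{π/2−1/L} g(θ)² · (sin θ)^{2α+1} · (cos θ)^{2β+1} dθ dφ ≤ K · L^{−1} · log L. -/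
open Real MeasureTheory intervalIntegral

private lemma rpow_sq' (x p : ℝ) (hx : 0 < x) : (x ^ p) ^ 2 = x ^ (2 * p) := by
  rw [sq, ← Real.rpow_add hx]; ring_nf

private lemma rpow_neg_two' (x : ℝ) (hx : 0 < x) : x ^ (-2 : ℝ) = (x⁻¹) ^ 2 := by
  rw [show (-2 : ℝ) = 2 * (-1) by norm_num, ← rpow_sq' x (-1) hx, Real.rpow_neg_one]

/-- The estimate over the region `R₂` in the variance bound for the harmonic ensemble, where
`g` plays the role of the Jacobi polynomial `P_L^{(α+1,β)}(cos 2θ)` and the hypothesis is the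
Szegő bound in the bulk range. -/
theorem harmonic_ensemble_region_R2 (α β C : ℝ) (hC : 0 < C) :
    ∃ K > (0 : ℝ), ∀ L : ℕ, 2 ≤ L → ∀ a : ℝ, 0 < a → a ≤ π / 2 → 1 / (L : ℝ) < a →
      ∀ g : ℝ → ℝ, Measurable g →
      (∀ θ ∈ Set.Icc (1 / (L : ℝ)) (π / 2 - 1 / L),
        |g θ| ≤ C * (L : ℝ) ^ (-(1 / 2 : ℝ)) * Real.sin θ ^ (-α - 3 / 2) *
          Real.cos θ ^ (-β - 1 / 2)) →
      (∫ φ in (max 0 (a - π / 2 + 1 / L))..(a - 1 / L), ∫ θ in (a - φ)..(π / 2 - 1 / L),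
          g θ ^ 2 * Real.sin θ ^ (2 * α + 1) * Real.cos θ ^ (2 * β + 1))
        ≤ K * (L : ℝ)⁻¹ * Real.log L := by
  refine ⟨π ^ 2 * C ^ 2 / 2 + 1, by positivity, ?_⟩
  intro L hL a ha haπ haL g hgm hg
  have hL2 : (2 : ℝ) ≤ (L : ℝ) := by exact_mod_cast hL
  have hL0 : (0 : ℝ) < L := by linarith
  set ε : ℝ := 1 / (L : ℝ) with hεdef
  have hε0 : 0 < ε := by positivity
  have hεhalf : ε ≤ 1 / 2 := by
    rw [hεdef]
    rw [div_le_div_iff₀ hL0 (by norm_num)]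
    linarith
  have hπ4 : π ≤ 4 := Real.pi_le_four
  have hπ3 : 3 < π := by
    have := Real.pi_gt_three; linarith
  have h2ε : 2 * ε ≤ π / 2 := by linarith
  set lo : ℝ := max 0 (a - π / 2 + ε) with hlodef
  set hi : ℝ := a - ε with hhidef
  have hlohi : lo ≤ hi := by
    apply max_le
    · simp only [hhidef]; linarith
    · simp only [hhidef]; linarith
  have hlogL0 : 0 < Real.log L := Real.log_pos (by linarith)
  have hlog2L : Real.log 2 ≤ Real.log L := Real.log_le_log (by norm_num) hL2
  set D : ℝ := C ^ 2 * (π / 2) ^ 2 / L with hDdef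
  have hD0 : 0 ≤ D := by positivity
  set F : ℝ → ℝ := fun θ => g θ ^ 2 * Real.sin θ ^ (2 * α + 1) * Real.cos θ ^ (2 * β + 1)
    with hFdef
  -- key bound on the inner integral
  have key : ∀ φ ∈ Set.Icc lo hi,
      (∫ θ in (a - φ)..(π / 2 - ε), F θ) ≤ D * (a - φ)⁻¹ := by
    intro φ hφ
    have hφ1 : ε ≤ a - φ := by
      have := hφ.2; simp only [hhidef] at this; linarith
    have hφ2 : a - φ ≤ π / 2 - ε := by
      have := le_trans (le_max_right 0 (a - π / 2 + ε)) hφ.1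
      linarith
    have haφ0 : 0 < a - φ := lt_of_lt_of_le hε0 hφ1
    by_cases hint : IntervalIntegrable F volume (a - φ) (π / 2 - ε)
    · have hbound : ∀ θ ∈ Set.Icc (a - φ) (π / 2 - ε), F θ ≤ D * θ ^ (-2 : ℝ) := by
        intro θ hθ
        have hθ1 : ε ≤ θ := le_trans hφ1 hθ.1
        have hθ0 : 0 < θ := lt_of_lt_of_le hε0 hθ1
        have hθ2 : θ ≤ π / 2 - ε := hθ.2
        have hs : 0 < Real.sin θ := Real.sin_pos_of_pos_of_lt_pi hθ0 (by linarith)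
        have hc : 0 < Real.cos θ := Real.cos_pos_of_mem_Ioo ⟨by linarith, by linarith⟩
        have hgθ := hg θ ⟨hθ1, hθ2⟩
        have hB0 : 0 ≤ C * (L : ℝ) ^ (-(1 / 2 : ℝ)) * Real.sin θ ^ (-α - 3 / 2) *
            Real.cos θ ^ (-β - 1 / 2) := by positivity
        have hsq : g θ ^ 2 ≤ (C * (L : ℝ) ^ (-(1 / 2 : ℝ)) * Real.sin θ ^ (-α - 3 / 2) *
            Real.cos θ ^ (-β - 1 / 2)) ^ 2 := by
          calc g θ ^ 2 = |g θ| ^ 2 := (sq_abs _).symm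
            _ ≤ _ := pow_le_pow_left₀ (abs_nonneg _) hgθ 2
        have hsp : (0 : ℝ) ≤ Real.sin θ ^ (2 * α + 1) := le_of_lt (Real.rpow_pos_of_pos hs _)
        have hcp : (0 : ℝ) ≤ Real.cos θ ^ (2 * β + 1) := le_of_lt (Real.rpow_pos_of_pos hc _)
        have step1 : F θ ≤ C ^ 2 * (L : ℝ)⁻¹ * Real.sin θ ^ (-2 : ℝ) := by
          have : F θ ≤ (C * (L : ℝ) ^ (-(1 / 2 : ℝ)) * Real.sin θ ^ (-α - 3 / 2) *
              Real.cos θ ^ (-β - 1 / 2)) ^ 2 * Real.sin θ ^ (2 * α + 1) *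
              Real.cos θ ^ (2 * β + 1) := by
            apply mul_le_mul_of_nonneg_right _ hcp
            exact mul_le_mul_of_nonneg_right hsq hsp
          refine le_trans this (le_of_eq ?_)
          have e1 : ((L : ℝ) ^ (-(1 / 2) : ℝ)) ^ 2 = (L : ℝ)⁻¹ := by
            rw [rpow_sq' _ _ hL0, show (2 : ℝ) * (-(1 / 2)) = -1 by norm_num,
              Real.rpow_neg_one]
          have e2 : (Real.sin θ ^ (-α - 3 / 2)) ^ 2 * Real.sin θ ^ (2 * α + 1)
              = Real.sin θ ^ (-2 : ℝ) := by
            rw [rpow_sq' _ _ hs, ← Real.rpow_add hs,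
              show 2 * (-α - 3 / 2) + (2 * α + 1) = (-2 : ℝ) by ring]
          have e3 : (Real.cos θ ^ (-β - 1 / 2)) ^ 2 * Real.cos θ ^ (2 * β + 1) = 1 := by
            rw [rpow_sq' _ _ hc, ← Real.rpow_add hc,
              show 2 * (-β - 1 / 2) + (2 * β + 1) = (0 : ℝ) by ring, Real.rpow_zero]
          calc (C * (L : ℝ) ^ (-(1 / 2) : ℝ) * Real.sin θ ^ (-α - 3 / 2) *
              Real.cos θ ^ (-β - 1 / 2)) ^ 2 * Real.sin θ ^ (2 * α + 1) *
              Real.cos θ ^ (2 * β + 1)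
              = C ^ 2 * ((L : ℝ) ^ (-(1 / 2) : ℝ)) ^ 2 *
                (((Real.sin θ ^ (-α - 3 / 2)) ^ 2 * Real.sin θ ^ (2 * α + 1)) *
                ((Real.cos θ ^ (-β - 1 / 2)) ^ 2 * Real.cos θ ^ (2 * β + 1))) := by ring
            _ = C ^ 2 * (L : ℝ)⁻¹ * Real.sin θ ^ (-2 : ℝ) := by
                rw [e1, e2, e3, mul_one, mul_assoc]
        have hsin : 2 / π * θ ≤ Real.sin θ :=
          Real.mul_le_sin (le_of_lt hθ0) (by linarith)
        have h2πθ : 0 < 2 / π * θ := by positivity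
        have step2 : Real.sin θ ^ (-2 : ℝ) ≤ (π / 2) ^ 2 * θ ^ (-2 : ℝ) := by
          have h1 : Real.sin θ ^ (-2 : ℝ) ≤ (2 / π * θ) ^ (-2 : ℝ) :=
            Real.rpow_le_rpow_of_nonpos h2πθ hsin (by norm_num)
          refine le_trans h1 (le_of_eq ?_)
          rw [rpow_neg_two' _ h2πθ, rpow_neg_two' _ hθ0, mul_inv, mul_pow]
          congr 2
          rw [show (2 / π : ℝ)⁻¹ = π / 2 by field_simp]
        calc F θ ≤ C ^ 2 * (L : ℝ)⁻¹ * Real.sin θ ^ (-2 : ℝ) := step1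
          _ ≤ C ^ 2 * (L : ℝ)⁻¹ * ((π / 2) ^ 2 * θ ^ (-2 : ℝ)) := by
              apply mul_le_mul_of_nonneg_left step2 (by positivity)
          _ = D * θ ^ (-2 : ℝ) := by rw [hDdef]; ring
      have hcont : IntervalIntegrable (fun θ => D * θ ^ (-2 : ℝ)) volume (a - φ)
          (π / 2 - ε) := by
        apply ContinuousOn.intervalIntegrable
        apply continuousOn_const.mul
        apply ContinuousOn.rpow_const continuousOn_id
        intro x hx
        rw [Set.uIcc_of_le hφ2] at hx
        exact Or.inl (ne_of_gt (lt_of_lt_of_le haφ0 hx.1))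
      have h0uIcc : (0 : ℝ) ∉ Set.uIcc (a - φ) (π / 2 - ε) :=
        Set.notMem_uIcc_of_lt haφ0 (by linarith)
      calc (∫ θ in (a - φ)..(π / 2 - ε), F θ)
          ≤ ∫ θ in (a - φ)..(π / 2 - ε), D * θ ^ (-2 : ℝ) :=
            intervalIntegral.integral_mono_on hφ2 hint hcont hbound
        _ = D * (((π / 2 - ε) ^ (-2 + 1 : ℝ) - (a - φ) ^ (-2 + 1 : ℝ)) / (-2 + 1)) := by
            rw [intervalIntegral.integral_const_mul, integral_rpow (Or.inr ⟨by norm_num, h0uIcc⟩)]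
        _ = D * ((a - φ)⁻¹ - (π / 2 - ε)⁻¹) := by
            rw [show (-2 + 1 : ℝ) = -1 by norm_num, Real.rpow_neg_one, Real.rpow_neg_one]
            ring
        _ ≤ D * (a - φ)⁻¹ := by
            apply mul_le_mul_of_nonneg_left _ hD0
            have : (0 : ℝ) ≤ (π / 2 - ε)⁻¹ := by
              apply inv_nonneg.mpr; linarith
            linarith
    · rw [intervalIntegral.integral_undef hint]
      positivity
  by_cases hI : IntervalIntegrable (fun φ => ∫ θ in (a - φ)..(π / 2 - ε), F θ) volume lo hi
  · have hcont2 : IntervalIntegrable (fun φ => D * (a - φ)⁻¹) volume lo hi := by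
      apply ContinuousOn.intervalIntegrable
      apply continuousOn_const.mul
      apply ContinuousOn.inv₀ (continuousOn_const.sub continuousOn_id)
      intro x hx
      rw [Set.uIcc_of_le hlohi] at hx
      have : x ≤ hi := hx.2
      have : ε ≤ a - x := by simp only [hhidef] at this; linarith
      exact ne_of_gt (lt_of_lt_of_le hε0 this)
    have step1 : (∫ φ in lo..hi, ∫ θ in (a - φ)..(π / 2 - ε), F θ)
        ≤ ∫ φ in lo..hi, D * (a - φ)⁻¹ :=
      intervalIntegral.integral_mono_on hlohi hI hcont2 key
    have hahi : a - hi = ε := by simp only [hhidef]; ring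
    have halo0 : ε ≤ a - lo := by
      have : lo ≤ hi := hlohi
      simp only [hhidef] at this; linarith
    have haloπ : a - lo ≤ 2 := by
      have h1 : 0 ≤ lo := le_max_left 0 _
      linarith
    have h0uIcc2 : (0 : ℝ) ∉ Set.uIcc (a - hi) (a - lo) := by
      apply Set.notMem_uIcc_of_lt
      · rw [hahi]; exact hε0
      · linarith
    have step2 : (∫ φ in lo..hi, D * (a - φ)⁻¹) = D * Real.log ((a - lo) / (a - hi)) := by
      rw [intervalIntegral.integral_const_mul]
      congr 1
      rw [intervalIntegral.integral_comp_sub_left (fun x => x⁻¹) a]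
      exact integral_inv h0uIcc2
    have step3 : Real.log ((a - lo) / (a - hi)) ≤ 2 * Real.log L := by
      rw [Real.log_div (by linarith) (by rw [hahi]; exact ne_of_gt hε0), hahi, hεdef,
        Real.log_div one_ne_zero (ne_of_gt hL0), Real.log_one]
      have hloga : Real.log (a - lo) ≤ Real.log 2 :=
        Real.log_le_log (by linarith) haloπ
      linarith
    calc (∫ φ in lo..hi, ∫ θ in (a - φ)..(π / 2 - ε), F θ)
        ≤ D * Real.log ((a - lo) / (a - hi)) := by rw [← step2]; exact step1
      _ ≤ D * (2 * Real.log L) := mul_le_mul_of_nonneg_left step3 hD0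
      _ ≤ (π ^ 2 * C ^ 2 / 2 + 1) * (L : ℝ)⁻¹ * Real.log L := by
          rw [hDdef, div_mul_eq_mul_div, div_le_iff₀ hL0]
          have h2 : (π ^ 2 * C ^ 2 / 2 + 1) * (L : ℝ)⁻¹ * Real.log L * L
              = (π ^ 2 * C ^ 2 / 2 + 1) * Real.log L := by
            field_simp
          rw [h2]
          nlinarith [hlogL0.le, sq_nonneg C, sq_nonneg π]
  · rw [intervalIntegral.integral_undef hI]
    positivity
end

section
/- Let α, β be real numbers and let C > 0. There exists a constant K > 0, depending only on C, such that the following holds for every integer L ≥ 2 and every a ∈ (0, π/2]. Let g : [0, π/2] → ℝ be measurable with |g(θ)| ≤ C·L^{−1/2}·(sin θ)^{−α−3/2}·(cos θ)^{−β−1/2} for all θ ∈ [1/L, π/2 − 1/L]. Then ∫_{max(0, a−1/L)}^{a} ∫_{1/L}^{π/2−1/L} g(θ)² · (sin θ)^{2α+1} · (cos θ)^{2β+1} dθ dφ ≤ K · L^{−1}. -/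
open Real MeasureTheory intervalIntegral

/-- The estimate over the region `R₃` in the variance bound for the harmonic ensemble, where
`g` plays the role of the Jacobi polynomial `P_L^{(α+1,β)}(cos 2θ)` and the hypothesis is the
Szegő bound in the bulk range. -/
theorem harmonic_ensemble_region_R3 (α β C : ℝ) (hC : 0 < C) :
    ∃ K > (0 : ℝ), ∀ L : ℕ, 2 ≤ L → ∀ a : ℝ, 0 < a → a ≤ π / 2 →
      ∀ g : ℝ → ℝ, Measurable g →
      (∀ θ ∈ Set.Icc (1 / (L : ℝ)) (π / 2 - 1 / L),
        |g θ| ≤ C * (L : ℝ) ^ (-(1 / 2 : ℝ)) * Real.sin θ ^ (-α - 3 / 2) *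
          Real.cos θ ^ (-β - 1 / 2)) →
      (∫ φ in (max 0 (a - 1 / L))..a, ∫ θ in (1 / (L : ℝ))..(π / 2 - 1 / L),
          g θ ^ 2 * Real.sin θ ^ (2 * α + 1) * Real.cos θ ^ (2 * β + 1))
        ≤ K * (L : ℝ)⁻¹ := by
  refine ⟨C ^ 2 * π ^ 2 / 4, by positivity, ?_⟩
  intro L hL a ha haπ g hg hbound
  have hπ : (2 : ℝ) ≤ π := by linarith [Real.pi_gt_three]
  set t : ℝ := 1 / (L : ℝ) with ht
  have hL2 : (2 : ℝ) ≤ L := by exact_mod_cast hL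
  have hLpos : (0 : ℝ) < L := by linarith
  have htpos : 0 < t := by positivity
  have ht2 : t ≤ 1 / 2 := by
    rw [ht, div_le_div_iff₀ hLpos (by norm_num)]; linarith
  have htb : t ≤ π / 2 - t := by linarith
  have hbpos : (0 : ℝ) < π / 2 - t := by linarith
  set f : ℝ → ℝ := fun θ => g θ ^ 2 * Real.sin θ ^ (2 * α + 1) * Real.cos θ ^ (2 * β + 1)
    with hf
  set M : ℝ := C ^ 2 * (L : ℝ)⁻¹ * (π / 2) ^ 2 with hM
  have hMpos : 0 < M := by positivity
  have hfnonneg : ∀ θ ∈ Set.Icc t (π / 2 - t), 0 ≤ f θ := by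
    intro θ hθ
    have hs : 0 ≤ Real.sin θ := Real.sin_nonneg_of_nonneg_of_le_pi (by linarith [hθ.1])
      (by linarith [hθ.2])
    have hc : 0 ≤ Real.cos θ := Real.cos_nonneg_of_mem_Icc
      ⟨by linarith [hθ.1], by linarith [hθ.2]⟩
    have := Real.rpow_nonneg hs (2 * α + 1)
    have := Real.rpow_nonneg hc (2 * β + 1)
    positivity
  have key : ∀ θ ∈ Set.Icc t (π / 2 - t), f θ ≤ M * (θ ^ 2)⁻¹ := by
    intro θ hθ
    have hθ0 : 0 < θ := lt_of_lt_of_le htpos hθ.1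
    have hθπ : θ < π / 2 := lt_of_le_of_lt hθ.2 (by linarith)
    have hs : 0 < Real.sin θ := Real.sin_pos_of_pos_of_lt_pi hθ0 (by linarith)
    have hc : 0 < Real.cos θ := Real.cos_pos_of_mem_Ioo ⟨by linarith, hθπ⟩
    have h1 : g θ ^ 2 ≤ (C * (L : ℝ) ^ (-(1 / 2 : ℝ)) * Real.sin θ ^ (-α - 3 / 2) *
        Real.cos θ ^ (-β - 1 / 2)) ^ 2 := by
      rw [← sq_abs]
      exact pow_le_pow_left₀ (abs_nonneg _) (hbound θ hθ) 2
    have h2 : f θ ≤ (C * (L : ℝ) ^ (-(1 / 2 : ℝ)) * Real.sin θ ^ (-α - 3 / 2) *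
        Real.cos θ ^ (-β - 1 / 2)) ^ 2 * Real.sin θ ^ (2 * α + 1) *
        Real.cos θ ^ (2 * β + 1) := by
      have hsp := Real.rpow_nonneg hs.le (2 * α + 1)
      have hcp := Real.rpow_nonneg hc.le (2 * β + 1)
      apply mul_le_mul_of_nonneg_right _ hcp
      exact mul_le_mul_of_nonneg_right h1 hsp
    have e1 : ((L : ℝ) ^ (-(1 / 2 : ℝ))) ^ 2 = (L : ℝ)⁻¹ := by
      rw [← Real.rpow_natCast ((L:ℝ) ^ (-(1/2:ℝ))) 2, ← Real.rpow_mul (Nat.cast_nonneg L)]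
      norm_num
      exact Real.rpow_neg_one _
    have e2 : (Real.sin θ ^ (-α - 3 / 2 : ℝ)) ^ 2 * Real.sin θ ^ (2 * α + 1) =
        Real.sin θ ^ (-2 : ℝ) := by
      rw [← Real.rpow_natCast (Real.sin θ ^ (-α - 3/2 : ℝ)) 2, ← Real.rpow_mul hs.le,
        ← Real.rpow_add hs]
      congr 1; push_cast; ring
    have e3 : (Real.cos θ ^ (-β - 1 / 2 : ℝ)) ^ 2 * Real.cos θ ^ (2 * β + 1) = 1 := by
      rw [← Real.rpow_natCast (Real.cos θ ^ (-β - 1/2 : ℝ)) 2, ← Real.rpow_mul hc.le,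
        ← Real.rpow_add hc, show (-β - 1/2) * (2:ℕ) + (2*β+1) = (0:ℝ) by push_cast; ring,
        Real.rpow_zero]
    have h3 : (C * (L : ℝ) ^ (-(1 / 2 : ℝ)) * Real.sin θ ^ (-α - 3 / 2) *
        Real.cos θ ^ (-β - 1 / 2)) ^ 2 * Real.sin θ ^ (2 * α + 1) *
        Real.cos θ ^ (2 * β + 1) = C ^ 2 * (L : ℝ)⁻¹ * Real.sin θ ^ (-2 : ℝ) := by
      calc (C * (L : ℝ) ^ (-(1 / 2 : ℝ)) * Real.sin θ ^ (-α - 3 / 2) *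
            Real.cos θ ^ (-β - 1 / 2)) ^ 2 * Real.sin θ ^ (2 * α + 1) *
            Real.cos θ ^ (2 * β + 1)
          = C ^ 2 * ((L : ℝ) ^ (-(1 / 2 : ℝ))) ^ 2 *
            ((Real.sin θ ^ (-α - 3 / 2 : ℝ)) ^ 2 * Real.sin θ ^ (2 * α + 1)) *
            ((Real.cos θ ^ (-β - 1 / 2 : ℝ)) ^ 2 * Real.cos θ ^ (2 * β + 1)) := by ring
        _ = C ^ 2 * (L : ℝ)⁻¹ * Real.sin θ ^ (-2 : ℝ) := by rw [e1, e2, e3]; ring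
    have e4 : Real.sin θ ^ (-2 : ℝ) = (Real.sin θ ^ 2)⁻¹ := by
      rw [Real.rpow_neg hs.le, show (2:ℝ) = ((2:ℕ):ℝ) by norm_num, Real.rpow_natCast]
    have h5 : (Real.sin θ ^ 2)⁻¹ ≤ (π / 2) ^ 2 * (θ ^ 2)⁻¹ := by
      have hsin : 2 / π * θ ≤ Real.sin θ := Real.mul_le_sin hθ0.le hθπ.le
      have hpos : 0 < 2 / π * θ := by positivity
      have hsq : (2 / π * θ) ^ 2 ≤ Real.sin θ ^ 2 := by
        exact pow_le_pow_left₀ hpos.le hsin 2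
      have : (Real.sin θ ^ 2)⁻¹ ≤ ((2 / π * θ) ^ 2)⁻¹ := by
        apply inv_anti₀ (by positivity) hsq
      refine this.trans (le_of_eq ?_)
      have hπ0 : π ≠ 0 := Real.pi_ne_zero
      field_simp
    calc f θ ≤ _ := h2
      _ = C ^ 2 * (L : ℝ)⁻¹ * Real.sin θ ^ (-2 : ℝ) := h3
      _ = C ^ 2 * (L : ℝ)⁻¹ * (Real.sin θ ^ 2)⁻¹ := by rw [e4]
      _ ≤ C ^ 2 * (L : ℝ)⁻¹ * ((π / 2) ^ 2 * (θ ^ 2)⁻¹) := by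
          apply mul_le_mul_of_nonneg_left h5 (by positivity)
      _ = M * (θ ^ 2)⁻¹ := by rw [hM]; ring
  -- integrability of the bounding function
  have hFcont : ContinuousOn (fun θ : ℝ => M * (θ ^ 2)⁻¹) (Set.uIcc t (π / 2 - t)) := by
    apply ContinuousOn.mul continuousOn_const
    apply ContinuousOn.inv₀ (by fun_prop)
    intro x hx
    rw [Set.uIcc_of_le htb] at hx
    have : 0 < x := lt_of_lt_of_le htpos hx.1
    positivity
  have hFint : IntervalIntegrable (fun θ : ℝ => M * (θ ^ 2)⁻¹) volume t (π / 2 - t) :=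
    hFcont.intervalIntegrable
  -- integrability of f
  have hfmeas : Measurable f := by
    rw [hf]; fun_prop
  have hfint : IntervalIntegrable f volume t (π / 2 - t) := by
    apply hFint.mono_fun hfmeas.aestronglyMeasurable
    rw [Set.uIoc_of_le htb]
    filter_upwards [ae_restrict_mem measurableSet_Ioc] with θ hθ
    have hθ' : θ ∈ Set.Icc t (π / 2 - t) := ⟨hθ.1.le, hθ.2⟩
    rw [Real.norm_eq_abs, abs_of_nonneg (hfnonneg θ hθ')]
    exact (key θ hθ').trans (le_abs_self _)
  -- bound inner integral
  have hI : (∫ θ in t..(π / 2 - t), f θ) ≤ C ^ 2 * (π / 2) ^ 2 := by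
    have h1 : (∫ θ in t..(π / 2 - t), f θ) ≤ ∫ θ in t..(π / 2 - t), M * (θ ^ 2)⁻¹ :=
      intervalIntegral.integral_mono_on htb hfint hFint key
    have h2 : (∫ θ in t..(π / 2 - t), M * (θ ^ 2)⁻¹) =
        M * ∫ θ in t..(π / 2 - t), (θ : ℝ) ^ (-2 : ℤ) := by
      rw [← intervalIntegral.integral_const_mul]
      apply intervalIntegral.integral_congr
      intro θ _
      simp only []
      rw [zpow_neg, zpow_two, sq]
    have h3 : (∫ θ in t..(π / 2 - t), (θ : ℝ) ^ (-2 : ℤ)) =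
        (((π / 2 - t) ^ (-1 : ℤ) - t ^ (-1 : ℤ)) / (-1 : ℤ)) := by
      rw [integral_zpow]
      · norm_num
      · right
        constructor
        · norm_num
        · rw [Set.uIcc_of_le htb]
          intro hmem
          exact absurd hmem.1 (by linarith)
    have h4 : (((π / 2 - t) ^ (-1 : ℤ) - t ^ (-1 : ℤ)) / (-1 : ℤ) : ℝ) ≤ (L : ℝ) := by
      have hb : (0:ℝ) < (π / 2 - t)⁻¹ := by positivity
      have htinv : (t : ℝ)⁻¹ = (L : ℝ) := by rw [ht]; field_simp
      simp only [zpow_neg, zpow_one]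
      push_cast
      rw [div_neg, div_one]
      linarith
    have h5 : (∫ θ in t..(π / 2 - t), M * (θ ^ 2)⁻¹) ≤ M * L := by
      rw [h2, h3]
      exact mul_le_mul_of_nonneg_left h4 hMpos.le
    have h6 : M * L = C ^ 2 * (π / 2) ^ 2 := by
      rw [hM]; field_simp
    linarith
  have hInonneg : 0 ≤ ∫ θ in t..(π / 2 - t), f θ :=
    intervalIntegral.integral_nonneg htb hfnonneg
  -- outer integral
  have houter : (∫ φ in (max 0 (a - t))..a, ∫ θ in t..(π / 2 - t), f θ) =
      (a - max 0 (a - t)) * ∫ θ in t..(π / 2 - t), f θ := by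
    rw [intervalIntegral.integral_const, smul_eq_mul]
  have hlen0 : 0 ≤ a - max 0 (a - t) := by
    have : max 0 (a - t) ≤ a := max_le ha.le (by linarith)
    linarith
  have hlen : a - max 0 (a - t) ≤ t := by
    have : a - t ≤ max 0 (a - t) := le_max_right _ _
    linarith
  rw [houter]
  calc (a - max 0 (a - t)) * ∫ θ in t..(π / 2 - t), f θ
      ≤ t * (C ^ 2 * (π / 2) ^ 2) := by
        apply mul_le_mul hlen hI hInonneg htpos.le
    _ = C ^ 2 * π ^ 2 / 4 * (L : ℝ)⁻¹ := by rw [ht]; field_simp; ring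
end

section
/- Let α > −1 be a real number, let β be a real number, and let C > 0. There exists a constant K > 0, depending only on α and C, such that the following holds for every integer L ≥ 2 and every a ∈ (0, π/2]. Let g : [0, π/2] → ℝ be measurable with |g(θ)| ≤ C·L^{α+1} for all θ ∈ [0, 1/L]. Then ∫_{max(0, a−1/L)}^{a} ∫_{min(a−φ, 1/L)}^{1/L} g(θ)² · (sin θ)^{2α+1} · (cos θ)^{2β+1} dθ dφ ≤ K · L^{−1}. -/
open Real MeasureTheory intervalIntegral

/-- The estimate over the region `R₄` in the variance bound for the harmonic ensemble, where
`g` plays the role of the Jacobi polynomial `P_L^{(α+1,β)}(cos 2θ)` and the hypothesis is the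
Szegő bound near `θ = 0`. -/
theorem harmonic_ensemble_region_R4 (α β C : ℝ) (hα : -1 < α) (hC : 0 < C) :
    ∃ K > (0 : ℝ), ∀ L : ℕ, 2 ≤ L → ∀ a : ℝ, 0 < a → a ≤ π / 2 →
      ∀ g : ℝ → ℝ, Measurable g →
      (∀ θ ∈ Set.Icc (0 : ℝ) (1 / L), |g θ| ≤ C * (L : ℝ) ^ (α + 1)) →
      (∫ φ in (max 0 (a - 1 / L))..a, ∫ θ in (min (a - φ) (1 / L))..(1 / (L : ℝ)),
          g θ ^ 2 * Real.sin θ ^ (2 * α + 1) * Real.cos θ ^ (2 * β + 1))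
        ≤ K * (L : ℝ)⁻¹ := by
  have hπ : (3 : ℝ) < π := Real.pi_gt_three
  have hp1 : (-1 : ℝ) < 2 * α + 1 := by linarith
  set Ks : ℝ := max 1 ((2 / π) ^ (2 * α + 1)) with hKs
  set Kc : ℝ := max 1 (Real.cos (1 / 2) ^ (2 * β + 1)) with hKc
  have hKs1 : (1 : ℝ) ≤ Ks := le_max_left _ _
  have hKc1 : (1 : ℝ) ≤ Kc := le_max_left _ _
  have hKs0 : (0 : ℝ) < Ks := by linarith
  have hKc0 : (0 : ℝ) < Kc := by linarith
  set B : ℝ := C ^ 2 * Ks * Kc / (2 * α + 2) with hB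
  have hB0 : (0 : ℝ) < B := by
    apply div_pos _ (by linarith)
    exact mul_pos (mul_pos (by positivity) hKs0) hKc0
  refine ⟨B, hB0, ?_⟩
  intro L hL a ha haπ g hg hgb
  have hL0 : (0 : ℝ) < L := by
    have : (2 : ℝ) ≤ L := by exact_mod_cast hL
    linarith
  have hL2 : (2 : ℝ) ≤ L := by exact_mod_cast hL
  have hiL0 : (0 : ℝ) < 1 / L := by positivity
  have hiL2 : 1 / (L : ℝ) ≤ 1 / 2 := by
    rw [div_le_div_iff₀ hL0 (by norm_num)]; linarith
  set D : ℝ := C ^ 2 * (L : ℝ) ^ (2 * α + 2) * Ks * Kc with hD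
  have hD0 : (0 : ℝ) < D := by
    have h1 : (0 : ℝ) < (L : ℝ) ^ (2 * α + 2) := Real.rpow_pos_of_pos hL0 _
    exact mul_pos (mul_pos (mul_pos (by positivity) h1) hKs0) hKc0
  set h : ℝ → ℝ := fun θ => g θ ^ 2 * Real.sin θ ^ (2 * α + 1) * Real.cos θ ^ (2 * β + 1)
    with hh
  -- basic facts on [0, 1/L]
  have hmem : ∀ θ ∈ Set.Icc (0 : ℝ) (1 / L), 0 ≤ θ ∧ θ ≤ 1 / 2 ∧ θ ≤ π / 2 := by
    intro θ hθ
    exact ⟨hθ.1, hθ.2.trans hiL2, by linarith [hθ.2.trans hiL2]⟩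
  have hsin_nonneg : ∀ θ ∈ Set.Icc (0 : ℝ) (1 / L), 0 ≤ Real.sin θ := by
    intro θ hθ
    obtain ⟨h0, _, h2⟩ := hmem θ hθ
    exact Real.sin_nonneg_of_nonneg_of_le_pi h0 (by linarith)
  have hcos_pos : ∀ θ ∈ Set.Icc (0 : ℝ) (1 / L), 0 < Real.cos θ := by
    intro θ hθ
    obtain ⟨h0, _, h2⟩ := hmem θ hθ
    exact Real.cos_pos_of_mem_Ioo ⟨by linarith, by linarith⟩
  have hnonneg : ∀ θ ∈ Set.Icc (0 : ℝ) (1 / L), 0 ≤ h θ := by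
    intro θ hθ
    have := hsin_nonneg θ hθ
    have := (hcos_pos θ hθ).le
    have h1 : 0 ≤ Real.sin θ ^ (2 * α + 1) := Real.rpow_nonneg ‹0 ≤ Real.sin θ› _
    have h2 : 0 ≤ Real.cos θ ^ (2 * β + 1) := Real.rpow_nonneg ‹0 ≤ Real.cos θ› _
    positivity
  -- key pointwise bound
  have key : ∀ θ ∈ Set.Icc (0 : ℝ) (1 / L), h θ ≤ D * θ ^ (2 * α + 1) := by
    intro θ hθ
    obtain ⟨h0, hhalf, hπ2⟩ := hmem θ hθ
    have hs0 := hsin_nonneg θ hθ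
    have hc0 := hcos_pos θ hθ
    -- bound on g θ ^ 2
    have hg2 : g θ ^ 2 ≤ C ^ 2 * (L : ℝ) ^ (2 * α + 2) := by
      have e1 : ((L : ℝ) ^ (α + 1)) ^ (2 : ℕ) = (L : ℝ) ^ (2 * α + 2) := by
        rw [← Real.rpow_natCast ((L : ℝ) ^ (α + 1)) 2, ← Real.rpow_mul hL0.le]
        norm_num
        ring_nf
      calc g θ ^ 2 = |g θ| ^ 2 := (sq_abs _).symm
        _ ≤ (C * (L : ℝ) ^ (α + 1)) ^ 2 :=
            pow_le_pow_left₀ (abs_nonneg _) (hgb θ hθ) 2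
        _ = C ^ 2 * ((L : ℝ) ^ (α + 1)) ^ (2 : ℕ) := by ring
        _ = C ^ 2 * (L : ℝ) ^ (2 * α + 2) := by rw [e1]
    -- bound on sin
    have hsin : Real.sin θ ^ (2 * α + 1) ≤ Ks * θ ^ (2 * α + 1) := by
      rcases le_or_gt 0 (2 * α + 1) with hps | hps
      · have h1 : Real.sin θ ^ (2 * α + 1) ≤ θ ^ (2 * α + 1) :=
          Real.rpow_le_rpow hs0 (Real.sin_le h0) hps
        have h2 : θ ^ (2 * α + 1) ≤ Ks * θ ^ (2 * α + 1) :=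
          le_mul_of_one_le_left (Real.rpow_nonneg h0 _) hKs1
        linarith
      · rcases eq_or_lt_of_le h0 with h0' | h0'
        · rw [← h0']
          simp [Real.zero_rpow (by linarith : 2 * α + 1 ≠ 0)]
        · have hjordan : 2 / π * θ ≤ Real.sin θ := Real.mul_le_sin h0 hπ2
          have hpos : (0 : ℝ) < 2 / π * θ := by positivity
          calc Real.sin θ ^ (2 * α + 1) ≤ (2 / π * θ) ^ (2 * α + 1) :=
                Real.rpow_le_rpow_of_nonpos hpos hjordan hps.le
            _ = (2 / π) ^ (2 * α + 1) * θ ^ (2 * α + 1) :=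
                Real.mul_rpow (by positivity) h0
            _ ≤ Ks * θ ^ (2 * α + 1) :=
                mul_le_mul_of_nonneg_right (le_max_right _ _) (Real.rpow_nonneg h0 _)
    -- bound on cos
    have hcos : Real.cos θ ^ (2 * β + 1) ≤ Kc := by
      rcases le_or_gt 0 (2 * β + 1) with hqs | hqs
      · have h1 : Real.cos θ ^ (2 * β + 1) ≤ (1 : ℝ) :=
          Real.rpow_le_one hc0.le (Real.cos_le_one θ) hqs
        linarith
      · have hc12 : Real.cos (1 / 2) ≤ Real.cos θ :=
          Real.cos_le_cos_of_nonneg_of_le_pi h0 (by linarith) hhalf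
        have hc120 : (0 : ℝ) < Real.cos (1 / 2) :=
          Real.cos_pos_of_mem_Ioo ⟨by linarith, by linarith⟩
        calc Real.cos θ ^ (2 * β + 1) ≤ Real.cos (1 / 2) ^ (2 * β + 1) :=
              Real.rpow_le_rpow_of_nonpos hc120 hc12 hqs.le
          _ ≤ Kc := le_max_right _ _
    have hsp : 0 ≤ Real.sin θ ^ (2 * α + 1) := Real.rpow_nonneg hs0 _
    have hcp : 0 ≤ Real.cos θ ^ (2 * β + 1) := Real.rpow_nonneg hc0.le _
    have step1 : g θ ^ 2 * Real.sin θ ^ (2 * α + 1)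
        ≤ (C ^ 2 * (L : ℝ) ^ (2 * α + 2)) * (Ks * θ ^ (2 * α + 1)) :=
      mul_le_mul hg2 hsin hsp (by positivity)
    have step2 : h θ ≤ ((C ^ 2 * (L : ℝ) ^ (2 * α + 2)) * (Ks * θ ^ (2 * α + 1))) * Kc := by
      refine mul_le_mul step1 hcos hcp ?_
      have : 0 ≤ Ks * θ ^ (2 * α + 1) := by positivity
      positivity
    calc h θ ≤ ((C ^ 2 * (L : ℝ) ^ (2 * α + 2)) * (Ks * θ ^ (2 * α + 1))) * Kc := step2
      _ = D * θ ^ (2 * α + 1) := by rw [hD]; ring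
  -- integrability of the dominating function
  have hF : IntervalIntegrable (fun θ : ℝ => D * θ ^ (2 * α + 1)) volume 0 (1 / L) :=
    (intervalIntegral.intervalIntegrable_rpow' hp1).const_mul D
  have hFnonneg : ∀ θ ∈ Set.Icc (0 : ℝ) (1 / L), 0 ≤ D * θ ^ (2 * α + 1) := by
    intro θ hθ
    have := Real.rpow_nonneg hθ.1 (2 * α + 1)
    positivity
  -- value of the dominating integral
  have hFval : (∫ θ in (0 : ℝ)..(1 / L), D * θ ^ (2 * α + 1)) = B := by
    rw [intervalIntegral.integral_const_mul,
      integral_rpow (Or.inl hp1)]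
    have e : (2 * α + 1 + 1 : ℝ) = 2 * α + 2 := by ring
    rw [e, Real.zero_rpow (by linarith : (2 * α + 2 : ℝ) ≠ 0), sub_zero, one_div,
      Real.inv_rpow hL0.le, hD, hB]
    have hLs : (L : ℝ) ^ (2 * α + 2) ≠ 0 := (Real.rpow_pos_of_pos hL0 _).ne'
    have hs : (2 * α + 2 : ℝ) ≠ 0 := by linarith
    field_simp
  -- bound on the inner integral
  have hinner_le : ∀ φ : ℝ, 0 ≤ a - φ →
      (∫ θ in (min (a - φ) (1 / L))..(1 / (L : ℝ)), h θ) ≤ B := by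
    intro φ hφ
    set m : ℝ := min (a - φ) (1 / L) with hm
    have hm0 : 0 ≤ m := le_min hφ hiL0.le
    have hm1 : m ≤ 1 / L := min_le_right _ _
    have hsub : Set.uIcc m (1 / (L : ℝ)) ⊆ Set.uIcc (0 : ℝ) (1 / L) := by
      rw [Set.uIcc_of_le hm1, Set.uIcc_of_le hiL0.le]
      exact Set.Icc_subset_Icc hm0 le_rfl
    have hFm : IntervalIntegrable (fun θ : ℝ => D * θ ^ (2 * α + 1)) volume m (1 / L) :=
      hF.mono_set hsub
    have hmeas : Measurable h := by
      rw [hh]; fun_prop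
    have hIocsub : Set.Ioc m (1 / (L : ℝ)) ⊆ Set.Icc (0 : ℝ) (1 / L) := fun x hx =>
      ⟨hm0.trans hx.1.le, hx.2⟩
    have hIsub : Set.uIoc m (1 / (L : ℝ)) ⊆ Set.Icc (0 : ℝ) (1 / L) := by
      rw [Set.uIoc_of_le hm1]; exact hIocsub
    have hIntH : IntervalIntegrable h volume m (1 / L) := by
      refine hFm.mono_fun (hmeas.aestronglyMeasurable.restrict) ?_
      refine (ae_restrict_iff' measurableSet_uIoc).2 (Filter.Eventually.of_forall ?_)
      intro θ hθ
      have hθ' := hIsub hθ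
      show ‖h θ‖ ≤ ‖D * θ ^ (2 * α + 1)‖
      rw [Real.norm_eq_abs, Real.norm_eq_abs, abs_of_nonneg (hnonneg θ hθ'),
        abs_of_nonneg (hFnonneg θ hθ')]
      exact key θ hθ'
    calc (∫ θ in m..(1 / (L : ℝ)), h θ)
        ≤ ∫ θ in m..(1 / (L : ℝ)), D * θ ^ (2 * α + 1) := by
          refine intervalIntegral.integral_mono_on hm1 hIntH hFm ?_
          intro θ hθ
          exact key θ ⟨hm0.trans hθ.1, hθ.2⟩
      _ ≤ ∫ θ in (0 : ℝ)..(1 / L), D * θ ^ (2 * α + 1) := by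
          refine intervalIntegral.integral_mono_interval hm0 hm1 le_rfl ?_ hF
          refine (ae_restrict_iff' measurableSet_Ioc).2 (Filter.Eventually.of_forall ?_)
          intro θ hθ
          exact hFnonneg θ ⟨hθ.1.le, hθ.2⟩
      _ = B := hFval
  have hinner_nonneg : ∀ φ : ℝ, 0 ≤ a - φ →
      0 ≤ ∫ θ in (min (a - φ) (1 / L))..(1 / (L : ℝ)), h θ := by
    intro φ hφ
    have hm0 : 0 ≤ min (a - φ) (1 / (L : ℝ)) := le_min hφ hiL0.le
    have hm1 : min (a - φ) (1 / (L : ℝ)) ≤ 1 / L := min_le_right _ _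
    refine intervalIntegral.integral_nonneg hm1 ?_
    intro θ hθ
    exact hnonneg θ ⟨hm0.trans hθ.1, hθ.2⟩
  -- outer bound
  have hlo_le : max 0 (a - 1 / L) ≤ a := max_le ha.le (by linarith)
  have houter : ∀ φ ∈ Set.uIoc (max 0 (a - 1 / L)) a,
      ‖∫ θ in (min (a - φ) (1 / L))..(1 / (L : ℝ)), h θ‖ ≤ B := by
    intro φ hφ
    rw [Set.uIoc_of_le hlo_le] at hφ
    have hφa : 0 ≤ a - φ := by linarith [hφ.2]
    rw [Real.norm_eq_abs, abs_of_nonneg (hinner_nonneg φ hφa)]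
    exact hinner_le φ hφa
  have hnorm := intervalIntegral.norm_integral_le_of_norm_le_const houter
  calc (∫ φ in (max 0 (a - 1 / L))..a, ∫ θ in (min (a - φ) (1 / L))..(1 / (L : ℝ)), h θ)
      ≤ |∫ φ in (max 0 (a - 1 / L))..a, ∫ θ in (min (a - φ) (1 / L))..(1 / (L : ℝ)), h θ| :=
        le_abs_self _
    _ ≤ B * |a - max 0 (a - 1 / L)| := by
        simpa [Real.norm_eq_abs] using hnorm
    _ ≤ B * (L : ℝ)⁻¹ := by
        refine mul_le_mul_of_nonneg_left ?_ hB0.le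
        rw [abs_of_nonneg (by linarith)]
        have : a - 1 / L ≤ max 0 (a - 1 / L) := le_max_right _ _
        rw [← one_div]
        linarith
end

section
/- Let d ≥ 1 be an integer. There exists a constant K > 0, depending only on d, such that for every integer L ≥ 1 and every r ∈ (0, π/2], setting N = binom(d+L, d), one has N² · ∫₀^r (sin φ)^{2d−1} · cos φ · ( ∫_{r−φ}^{π/2} (sin θ)^{2d−1} · (cos θ)^{2L+1} dθ ) dφ ≤ K · L^{d−1/2}. -/
open Real MeasureTheory intervalIntegral

/-! On `[0, π/2]` we have `sin θ ≤ θ` and `cos θ ≤ exp (-2θ²/π²)`, so with `s = √L` the inner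
integrand is at most `θ^(2d-1) exp (-4s²θ²/π²)`. Trading the Gaussian for `e^(π²/4) e^(-2sθ)`
(AM-GM) and the power for `(2d-1)! e^(sθ) / s^(2d-1)` bounds it by `L^(-(d-1/2)) e^(-sθ)` up to a
constant. Integrating this exponential in `θ` and then in `φ` (the outer weight is at most `1`)
gains a factor `1/s² = 1/L`, and `N ≤ ((d+1)L)^d` makes `N² L^(-(d-1/2)) / L ≲ L^(d-1/2)`. -/

lemma integral_exp_neg_mul_le {s : ℝ} (hs : 0 < s) (a b : ℝ) :
    ∫ x in a..b, exp (-(s * x)) ≤ exp (-(s * a)) / s := by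
  have hderiv (x : ℝ) : HasDerivAt (fun x ↦ exp (-(s * x)) / -s) (exp (-(s * x))) x := by
    have h : HasDerivAt (fun x ↦ -(s * x)) (-s) x := by
      simpa using (hasDerivAt_id x).const_mul (-s)
    simpa [hs.ne'] using h.exp.div_const (-s)
  rw [integral_eq_sub_of_hasDerivAt (fun x _ ↦ hderiv x)
    ((by fun_prop : Continuous fun x ↦ exp (-(s * x))).intervalIntegrable _ _)]
  linarith [div_pos (exp_pos (-(s * b))) hs, div_neg (exp (-(s * a))) (b := s),
    div_neg (exp (-(s * b))) (b := s)]

lemma cos_le_exp_neg_mul_sq {x : ℝ} (hx : |x| ≤ π) : cos x ≤ exp (-(2 / π ^ 2 * x ^ 2)) := by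
  linarith [cos_le_one_sub_mul_cos_sq hx, add_one_le_exp (-(2 / π ^ 2 * x ^ 2))]

lemma exp_neg_mul_sq_le (s x : ℝ) :
    exp (-(4 * s ^ 2 / π ^ 2 * x ^ 2)) ≤ exp (π ^ 2 / 4) * exp (-(2 * (s * x))) := by
  rw [← exp_add, exp_le_exp]
  have h : 4 * s ^ 2 / π ^ 2 * x ^ 2 - 2 * (s * x) + π ^ 2 / 4
      = (2 * s * x / π - π / 2) ^ 2 := by
    field_simp; ring
  linarith [sq_nonneg (2 * s * x / π - π / 2)]

lemma pow_le_factorial_mul_exp_div {s x : ℝ} (hs : 0 < s) (hx : 0 ≤ x) (n : ℕ) :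
    x ^ n ≤ n.factorial * exp (s * x) / s ^ n := by
  have h := pow_div_factorial_le_exp (s * x) (mul_nonneg hs.le hx) n
  rw [div_le_iff₀ (by positivity)] at h
  rw [le_div_iff₀ (by positivity)]
  linarith [mul_pow s x n]

lemma sin_pow_mul_cos_pow_le {n m : ℕ} {s θ : ℝ} (hs : 0 < s) (hsm : 2 * s ^ 2 ≤ m)
    (h0 : 0 ≤ θ) (h1 : θ ≤ π / 2) :
    sin θ ^ n * cos θ ^ m ≤ exp (π ^ 2 / 4) * n.factorial / s ^ n * exp (-(s * θ)) := by
  have hcos0 := cos_nonneg_of_mem_Icc ⟨by linarith [pi_pos], h1⟩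
  have hsin : sin θ ^ n ≤ θ ^ n :=
    pow_le_pow_left₀ (sin_nonneg_of_nonneg_of_le_pi h0 (by linarith [pi_pos])) (sin_le h0) n
  have hcos : cos θ ^ m ≤ exp (π ^ 2 / 4) * exp (-(2 * (s * θ))) := calc
    cos θ ^ m ≤ exp (-(2 / π ^ 2 * θ ^ 2)) ^ m :=
      pow_le_pow_left₀ hcos0
        (cos_le_exp_neg_mul_sq (by rw [abs_of_nonneg h0]; linarith [pi_pos])) m
    _ = exp (-(2 * m / π ^ 2 * θ ^ 2)) := by rw [← exp_nat_mul]; ring_nf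
    _ ≤ exp (-(4 * s ^ 2 / π ^ 2 * θ ^ 2)) := by gcongr exp (-(?_ / π ^ 2 * θ ^ 2)); linarith
    _ ≤ _ := exp_neg_mul_sq_le s θ
  have hexp : exp (s * θ) * exp (-(2 * (s * θ))) = exp (-(s * θ)) := by rw [← exp_add]; ring_nf
  calc sin θ ^ n * cos θ ^ m ≤ θ ^ n * (exp (π ^ 2 / 4) * exp (-(2 * (s * θ)))) :=
        mul_le_mul hsin hcos (pow_nonneg hcos0 _) (pow_nonneg h0 _)
    _ ≤ n.factorial * exp (s * θ) / s ^ n * (exp (π ^ 2 / 4) * exp (-(2 * (s * θ)))) := by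
        gcongr; exact pow_le_factorial_mul_exp_div hs h0 n
    _ = _ := by rw [← hexp]; ring

lemma integral_sin_pow_mul_cos_pow_le {n m : ℕ} {s t : ℝ} (hs : 0 < s) (hsm : 2 * s ^ 2 ≤ m)
    (ht0 : 0 ≤ t) (ht : t ≤ π / 2) :
    ∫ θ in t..π / 2, sin θ ^ n * cos θ ^ m
      ≤ exp (π ^ 2 / 4) * n.factorial / s ^ n / s * exp (-(s * t)) := by
  calc _ ≤ ∫ θ in t..π / 2, exp (π ^ 2 / 4) * n.factorial / s ^ n * exp (-(s * θ)) :=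
        integral_mono_on ht (Continuous.intervalIntegrable (by fun_prop) _ _)
          (Continuous.intervalIntegrable (by fun_prop) _ _)
          fun θ hθ ↦ sin_pow_mul_cos_pow_le hs hsm (ht0.trans hθ.1) hθ.2
    _ ≤ exp (π ^ 2 / 4) * n.factorial / s ^ n * (exp (-(s * t)) / s) := by
        rw [intervalIntegral.integral_const_mul]; gcongr; exact integral_exp_neg_mul_le hs _ _
    _ = _ := by ring

lemma integral_sin_pow_mul_cos_mul_integral_le {n m : ℕ} {s r : ℝ} (hs : 0 < s)
    (hsm : 2 * s ^ 2 ≤ m) (hr0 : 0 ≤ r) (hr : r ≤ π / 2) :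
    ∫ φ in 0..r, sin φ ^ n * cos φ * ∫ θ in (r - φ)..(π / 2), sin θ ^ n * cos θ ^ m
      ≤ exp (π ^ 2 / 4) * n.factorial / s ^ n / s ^ 2 := by
  set C := exp (π ^ 2 / 4) * n.factorial / s ^ n / s
  have hF : Continuous fun φ ↦ ∫ θ in (r - φ)..(π / 2), sin θ ^ n * cos θ ^ m := by
    simp only [integral_symm (π / 2)]
    exact ((continuous_primitive
      (fun a b ↦ Continuous.intervalIntegrable (by fun_prop) a b) _).comp (by fun_prop)).neg
  have hbound (φ : ℝ) (hφ : φ ∈ Set.Icc 0 r) :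
      sin φ ^ n * cos φ * ∫ θ in (r - φ)..(π / 2), sin θ ^ n * cos θ ^ m
        ≤ C * exp (-(s * (r - φ))) := by
    have hsin := sin_nonneg_of_nonneg_of_le_pi hφ.1 (by linarith [pi_pos, hφ.2])
    have hcos := cos_nonneg_of_mem_Icc ⟨by linarith [pi_pos, hφ.1], hφ.2.trans hr⟩
    calc _ ≤ sin φ ^ n * cos φ * (C * exp (-(s * (r - φ)))) :=
          mul_le_mul_of_nonneg_left
            (integral_sin_pow_mul_cos_pow_le hs hsm (by linarith [hφ.2]) (by linarith [hφ.1]))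
            (by positivity)
      _ ≤ _ := mul_le_of_le_one_left (by positivity)
          (mul_le_one₀ (pow_le_one₀ hsin (sin_le_one φ)) hcos (cos_le_one φ))
  calc _ ≤ ∫ φ in 0..r, C * exp (-(s * (r - φ))) :=
        integral_mono_on hr0
          (((by fun_prop : Continuous fun φ ↦ sin φ ^ n * cos φ).mul hF).intervalIntegrable _ _)
          (Continuous.intervalIntegrable (by fun_prop) _ _) hbound
    _ ≤ C * (exp (-(s * 0)) / s) := by
        rw [intervalIntegral.integral_const_mul, integral_comp_sub_left (fun x ↦ exp (-(s * x))),
          sub_self, sub_zero]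
        gcongr
        exact integral_exp_neg_mul_le hs _ _
    _ = _ := by simp only [C, mul_zero, neg_zero, exp_zero]; ring

lemma Nat.choose_add_le_mul_pow {d L : ℕ} (hL : 1 ≤ L) : (d + L).choose d ≤ ((d + 1) * L) ^ d :=
  (Nat.choose_le_pow _ _).trans (Nat.pow_le_pow_left (by nlinarith) d)

lemma sqrt_pow_two_mul_sub_one {x : ℝ} (hx : 0 ≤ x) {d : ℕ} (hd : 1 ≤ d) :
    √x ^ (2 * d - 1) = x ^ ((d : ℝ) - 1 / 2) := by
  rw [← rpow_natCast, ← rpow_div_two_eq_sqrt _ hx]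
  congr 1
  push_cast [Nat.cast_sub (by omega : 1 ≤ 2 * d)]
  ring

/-- Variance estimate for the projective ensemble on `ℂP^d`: with `N = binom(d+L, d)`,
`N² ∫₀ʳ (sin φ)^{2d-1} cos φ (∫_{r-φ}^{π/2} (sin θ)^{2d-1} (cos θ)^{2L+1} dθ) dφ ≤ K L^{d-1/2}`. -/
theorem projective_ensemble_variance_integral (d : ℕ) (hd : 1 ≤ d) :
    ∃ K > (0 : ℝ), ∀ L : ℕ, 1 ≤ L → ∀ r : ℝ, 0 < r → r ≤ π / 2 →
      ((d + L).choose d : ℝ) ^ 2 *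
          ∫ φ in (0 : ℝ)..r, Real.sin φ ^ (2 * d - 1) * Real.cos φ *
            ∫ θ in (r - φ)..(π / 2), Real.sin θ ^ (2 * d - 1) * Real.cos θ ^ (2 * L + 1)
        ≤ K * (L : ℝ) ^ ((d : ℝ) - 1 / 2) := by
  refine ⟨((d : ℝ) + 1) ^ (2 * d) * (exp (π ^ 2 / 4) * (2 * d - 1).factorial), by positivity, ?_⟩
  intro L hL r hr0 hr
  have hL0 : (0 : ℝ) < L := by exact_mod_cast hL
  set s := √(L : ℝ)
  have hs : 0 < s := sqrt_pos.mpr hL0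
  have hs2 : s ^ 2 = L := sq_sqrt hL0.le
  have hI := integral_sin_pow_mul_cos_mul_integral_le (n := 2 * d - 1) (m := 2 * L + 1) hs
    (by push_cast; linarith) hr0.le hr
  have hN : ((d + L).choose d : ℝ) ^ 2 ≤ (((d : ℝ) + 1) * L) ^ (2 * d) := by
    rw [pow_mul']
    exact pow_le_pow_left₀ (by positivity) (by exact_mod_cast Nat.choose_add_le_mul_pow hL) 2
  calc _ ≤ (((d : ℝ) + 1) * L) ^ (2 * d) *
          (exp (π ^ 2 / 4) * (2 * d - 1).factorial / s ^ (2 * d - 1) / s ^ 2) :=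
        (mul_le_mul_of_nonneg_left hI (sq_nonneg _)).trans
          (mul_le_mul_of_nonneg_right hN (by positivity))
    _ = ((d : ℝ) + 1) ^ (2 * d) * (exp (π ^ 2 / 4) * (2 * d - 1).factorial)
          * s ^ (2 * d - 1) := by
        obtain ⟨n, hn⟩ : ∃ n, 2 * d = n + 1 := ⟨2 * d - 1, by omega⟩
        rw [← hs2, hn, Nat.add_sub_cancel, mul_pow, ← pow_mul]
        field_simp
        ring
    _ = _ := by rw [sqrt_pow_two_mul_sub_one hL0.le hd]
end

section
/- Let d ≥ 1 be an integer. There exists a constant K > 0, depending only on d, such that for every real L ≥ 1 and every r ∈ (0, π/2], one has ∫₀^r φ^{2d−1} · ( ∫_{r−φ}^{π/2} θ^{2d−1} · exp(−L·θ²/2) dθ ) dφ ≤ K · L^{−d−1/2}. -/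
/-! Bounding `φ ^ (2d-1)` by `(π/2) ^ (2d-1)` and substituting `a = r - φ`, the double integral is
at most `(π/2) ^ (2d-1) ∫₀^{π/2} ∫_a^{π/2} g`, where `g θ = θ ^ (2d-1) exp (-Lθ²/2)`. Exchanging the
order of integration turns this into `∫₀^{π/2} θ g θ dθ ≤ ∫₀^∞ θ ^ 2d exp (-Lθ²/2) dθ`, a Gamma
integral equal to `(L/2) ^ (-d-1/2) Γ(d+1/2) / 2`. -/

open Real MeasureTheory intervalIntegral Set

section TailIntegral

variable {g : ℝ → ℝ}

theorem hasDerivAt_integral_tail (hg : Continuous g) (a b : ℝ) :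
    HasDerivAt (fun u => ∫ θ in u..b, g θ) (-g a) a :=
  integral_hasDerivAt_left (hg.intervalIntegrable a b) (hg.stronglyMeasurableAtFilter _ _)
    hg.continuousAt

theorem continuous_integral_tail (hg : Continuous g) (b : ℝ) :
    Continuous fun a => ∫ θ in a..b, g θ :=
  continuous_iff_continuousAt.2 fun a => (hasDerivAt_integral_tail hg a b).continuousAt

/-- Integration by parts against `a ↦ a`, i.e. Fubini on the triangle `0 ≤ a ≤ θ ≤ b`. -/
theorem integral_integral_tail (hg : Continuous g) (b : ℝ) :
    ∫ a in 0..b, (∫ θ in a..b, g θ) = ∫ θ in 0..b, θ * g θ := by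
  have hparts := integral_mul_deriv_eq_deriv_mul (a := 0) (b := b)
    (fun x _ => hasDerivAt_id x) (fun x _ => hasDerivAt_integral_tail hg x b)
    intervalIntegrable_const (hg.neg.intervalIntegrable 0 b)
  simp only [id, integral_same, mul_zero, zero_mul, sub_zero, one_mul, mul_neg,
    intervalIntegral.integral_neg] at hparts
  linarith

theorem integral_pow_mul_integral_tail_le (hg : Continuous g) (n : ℕ) {r b : ℝ} (hr : 0 ≤ r)
    (hrb : r ≤ b) (hg0 : ∀ θ ∈ Icc 0 b, 0 ≤ g θ) :
    ∫ φ in 0..r, φ ^ n * ∫ θ in (r - φ)..b, g θ ≤ b ^ n * ∫ θ in 0..b, θ * g θ := by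
  have htail_nonneg : ∀ a ∈ Icc 0 b, 0 ≤ ∫ θ in a..b, g θ := fun a ha =>
    integral_nonneg ha.2 fun θ hθ => hg0 θ ⟨ha.1.trans hθ.1, hθ.2⟩
  have htail_cont := continuous_integral_tail hg b
  calc ∫ φ in 0..r, φ ^ n * ∫ θ in (r - φ)..b, g θ
      ≤ ∫ φ in 0..r, b ^ n * ∫ θ in (r - φ)..b, g θ := by
        refine integral_mono_on hr ?_ ?_ fun φ hφ => ?_
        · exact ((continuous_pow n).mul (htail_cont.comp (by fun_prop))).intervalIntegrable _ _
        · exact (continuous_const.mul (htail_cont.comp (by fun_prop))).intervalIntegrable _ _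
        · refine mul_le_mul_of_nonneg_right (pow_le_pow_left₀ hφ.1 (hφ.2.trans hrb) n) ?_
          exact htail_nonneg _ ⟨by linarith [hφ.2], by linarith [hφ.1]⟩
    _ = b ^ n * ∫ a in 0..r, ∫ θ in a..b, g θ := by
        rw [intervalIntegral.integral_const_mul,
          integral_comp_sub_left (fun a => ∫ θ in a..b, g θ), sub_self, sub_zero]
    _ ≤ b ^ n * ∫ a in 0..b, ∫ θ in a..b, g θ := by
        refine mul_le_mul_of_nonneg_left ?_ (pow_nonneg (hr.trans hrb) n)
        refine integral_mono_interval le_rfl hr hrb ?_ (htail_cont.intervalIntegrable _ _)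
        exact (ae_restrict_iff' measurableSet_Ioc).2
          (Filter.Eventually.of_forall fun a ha => htail_nonneg a ⟨ha.1.le, ha.2⟩)
    _ = b ^ n * ∫ θ in 0..b, θ * g θ := by rw [integral_integral_tail hg]

end TailIntegral

theorem integral_pow_mul_exp_neg_mul_sq_le (m : ℕ) {c b : ℝ} (hc : 0 < c) (hb : 0 ≤ b) :
    ∫ θ in 0..b, θ ^ m * exp (-c * θ ^ 2) ≤
      c ^ (-((m : ℝ) + 1) / 2) / 2 * Gamma (((m : ℝ) + 1) / 2) := by
  have hm : (-1 : ℝ) < m := by linarith [m.cast_nonneg (α := ℝ)]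
  have hint : IntegrableOn (fun θ : ℝ => θ ^ m * exp (-c * θ ^ 2)) (Ioi 0) := by
    simpa [rpow_natCast] using integrableOn_rpow_mul_exp_neg_mul_sq hc hm
  have hval : ∫ θ in Ioi 0, θ ^ m * exp (-c * θ ^ 2) =
      c ^ (-((m : ℝ) + 1) / 2) / 2 * Gamma (((m : ℝ) + 1) / 2) := by
    have := integral_rpow_mul_exp_neg_mul_rpow two_pos hm hc
    simp only [rpow_natCast, rpow_two] at this
    rw [this]; ring
  rw [integral_of_le hb, ← hval]
  refine setIntegral_mono_set hint ?_ Ioc_subset_Ioi_self.eventuallyLE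
  exact (ae_restrict_iff' measurableSet_Ioi).2
    (Filter.Eventually.of_forall fun θ hθ => by have : (0:ℝ) < θ := hθ; positivity)

/-- Intermediate integral estimate in the variance bound for the projective ensemble:
`∫₀ʳ φ^{2d-1} (∫_{r-φ}^{π/2} θ^{2d-1} exp(-Lθ²/2) dθ) dφ ≤ K L^{-d-1/2}`. -/
theorem projective_ensemble_gaussian_integral (d : ℕ) (hd : 1 ≤ d) :
    ∃ K > (0 : ℝ), ∀ L : ℝ, 1 ≤ L → ∀ r : ℝ, 0 < r → r ≤ π / 2 →
      (∫ φ in (0 : ℝ)..r, φ ^ (2 * d - 1) *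
          ∫ θ in (r - φ)..(π / 2), θ ^ (2 * d - 1) * Real.exp (-L * θ ^ 2 / 2))
        ≤ K * L ^ (-(d : ℝ) - 1 / 2) := by
  refine ⟨(π / 2) ^ (2 * d - 1) * (Gamma (d + 1 / 2) / (2 * 2 ^ (-(d : ℝ) - 1 / 2))),
    by positivity, fun L hL r hr hrπ => ?_⟩
  have hL2 : 0 < L / 2 := by positivity
  have hexponent : -(((2 * d : ℕ) : ℝ) + 1) / 2 = -(d : ℝ) - 1 / 2 := by push_cast; ring
  calc _ ≤ (π / 2) ^ (2 * d - 1) *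
        ∫ θ in 0..π / 2, θ * (θ ^ (2 * d - 1) * exp (-L * θ ^ 2 / 2)) :=
        integral_pow_mul_integral_tail_le (by fun_prop) _ hr.le hrπ
          fun θ hθ => by have := hθ.1; positivity
    _ = (π / 2) ^ (2 * d - 1) * ∫ θ in 0..π / 2, θ ^ (2 * d) * exp (-(L / 2) * θ ^ 2) := by
        congr 1
        refine integral_congr fun θ _ => ?_
        rw [← mul_assoc, ← pow_succ', Nat.sub_add_cancel (by omega)]
        ring_nf
    _ ≤ (π / 2) ^ (2 * d - 1) *
        ((L / 2) ^ (-(((2 * d : ℕ) : ℝ) + 1) / 2) / 2 * Gamma ((((2 * d : ℕ) : ℝ) + 1) / 2)) :=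
        mul_le_mul_of_nonneg_left (integral_pow_mul_exp_neg_mul_sq_le _ hL2 (by positivity))
          (by positivity)
    _ = _ := by
        rw [hexponent, div_rpow (by linarith) zero_le_two]
        push_cast
        field_simp
end
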